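/- arXiv:1003.0613 — 4 statements merged into one kernel-verified Lean document; each statement's English description precedes it below -/
import Mathlib

section
/- Let M be a closed subspace of bounded operators on a Hilbert space H that is a ternary ring of operators (i.e. M M* M ⊆ M), and let u ∈ B(H). If the closed linear span of M*u equals the closed linear span of M*M, and the closed linear span of uM* equals the closed linear span of MM*, then the closed linear span of uu*M equals M. -/
noncomputable section

variable {H : Type*} [NormedAddCommGroup H] [InnerProductSpace ℂ H] [CompleteSpace H]

/-- Closed linear span of a set of bounded operators. -/
def clspan (A : Set (H →L[ℂ] H)) : Set (H →L[ℂ] H) :=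
  closure (Submodule.span ℂ A : Set (H →L[ℂ] H))

/-- Set of all products `a * b` with `a ∈ A`, `b ∈ B`. -/
def pmul (A B : Set (H →L[ℂ] H)) : Set (H →L[ℂ] H) := Set.image2 (· * ·) A B

/-- The set of adjoints of elements of `A`. -/
def sstar (A : Set (H →L[ℂ] H)) : Set (H →L[ℂ] H) := star '' A

/-- `M` is a ternary ring of operators: a norm-closed linear subspace with `M M* M ⊆ M`. -/
structure IsTRO (M : Set (H →L[ℂ] H)) : Prop where
  isClosed : IsClosed M
  zero_mem : (0 : H →L[ℂ] H) ∈ M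
  add_mem : ∀ x ∈ M, ∀ y ∈ M, x + y ∈ M
  smul_mem : ∀ (c : ℂ), ∀ x ∈ M, c • x ∈ M
  mul_mem : ∀ x ∈ M, ∀ y ∈ M, ∀ z ∈ M, x * star y * z ∈ M

/-- `u` is associated to the TRO `M`:  `cl-span(M* u) = cl-span(M* M)` and
`cl-span(u M*) = cl-span(M M*)`. -/
def AssociatedTo (u : H →L[ℂ] H) (M : Set (H →L[ℂ] H)) : Prop :=
  clspan (pmul (sstar M) {u}) = clspan (pmul (sstar M) M) ∧
  clspan (pmul {u} (sstar M)) = clspan (pmul M (sstar M))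

/-! ### Auxiliary lemmas -/

namespace TROAux

lemma subset_clspan (A : Set (H →L[ℂ] H)) : A ⊆ clspan A :=
  fun _ hx => subset_closure (Submodule.subset_span hx)

lemma clspan_le {A B : Set (H →L[ℂ] H)} (h : A ⊆ clspan B) : clspan A ⊆ clspan B := by
  have h1 : Submodule.span ℂ A ≤ (Submodule.span ℂ B).topologicalClosure := by
    apply Submodule.span_le.mpr
    intro x hx
    exact h hx
  have h2 : closure (Submodule.span ℂ A : Set (H →L[ℂ] H)) ⊆
      ((Submodule.span ℂ B).topologicalClosure : Set (H →L[ℂ] H)) :=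
    closure_minimal h1 (Submodule.span ℂ B).isClosed_topologicalClosure
  exact h2

lemma clspan_mono {A B : Set (H →L[ℂ] H)} (h : A ⊆ B) : clspan A ⊆ clspan B :=
  clspan_le (h.trans (subset_clspan B))

lemma pmul_clspan_left_subset (A B : Set (H →L[ℂ] H)) :
    pmul (clspan A) B ⊆ clspan (pmul A B) := by
  rintro _ ⟨a, ha, b, hb, rfl⟩
  have hmap : ((fun y => y * b) '' (Submodule.span ℂ A : Set (H →L[ℂ] H))) ⊆
      (Submodule.span ℂ (pmul A B) : Set (H →L[ℂ] H)) := by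
    rintro _ ⟨y, hy, rfl⟩
    have h1 : y * b ∈ Submodule.map (LinearMap.mulRight ℂ b) (Submodule.span ℂ A) :=
      Submodule.mem_map_of_mem hy
    rw [Submodule.map_span] at h1
    refine Submodule.span_mono ?_ h1
    rintro _ ⟨z, hz, rfl⟩
    exact ⟨z, hz, b, hb, rfl⟩
  have h2 : a * b ∈ closure ((fun y => y * b) '' (Submodule.span ℂ A : Set (H →L[ℂ] H))) :=
    image_closure_subset_closure_image (continuous_mul_right b) ⟨a, ha, rfl⟩
  exact closure_mono hmap h2

lemma pmul_clspan_right_subset (A B : Set (H →L[ℂ] H)) :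
    pmul A (clspan B) ⊆ clspan (pmul A B) := by
  rintro _ ⟨a, ha, b, hb, rfl⟩
  have hmap : ((fun y => a * y) '' (Submodule.span ℂ B : Set (H →L[ℂ] H))) ⊆
      (Submodule.span ℂ (pmul A B) : Set (H →L[ℂ] H)) := by
    rintro _ ⟨y, hy, rfl⟩
    have h1 : a * y ∈ Submodule.map (LinearMap.mulLeft ℂ a) (Submodule.span ℂ B) :=
      Submodule.mem_map_of_mem hy
    rw [Submodule.map_span] at h1
    refine Submodule.span_mono ?_ h1
    rintro _ ⟨z, hz, rfl⟩
    exact ⟨a, ha, z, hz, rfl⟩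
  have h2 : a * b ∈ closure ((fun y => a * y) '' (Submodule.span ℂ B : Set (H →L[ℂ] H))) :=
    image_closure_subset_closure_image (continuous_mul_left a) ⟨b, hb, rfl⟩
  exact closure_mono hmap h2

lemma clspan_pmul_clspan_left (A B : Set (H →L[ℂ] H)) :
    clspan (pmul (clspan A) B) = clspan (pmul A B) :=
  subset_antisymm (clspan_le (pmul_clspan_left_subset A B))
    (clspan_mono (Set.image2_subset (subset_clspan A) subset_rfl))

lemma clspan_pmul_clspan_right (A B : Set (H →L[ℂ] H)) :
    clspan (pmul A (clspan B)) = clspan (pmul A B) :=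
  subset_antisymm (clspan_le (pmul_clspan_right_subset A B))
    (clspan_mono (Set.image2_subset subset_rfl (subset_clspan B)))

lemma sstar_sstar (A : Set (H →L[ℂ] H)) : sstar (sstar A) = A := by
  ext x
  constructor
  · rintro ⟨_, ⟨z, hz, rfl⟩, rfl⟩
    simpa [star_star] using hz
  · intro hx
    exact ⟨star x, ⟨x, hx, rfl⟩, star_star x⟩

lemma star_mem_span {A : Set (H →L[ℂ] H)} {y : H →L[ℂ] H}
    (hy : y ∈ Submodule.span ℂ A) : star y ∈ Submodule.span ℂ (sstar A) := by
  induction hy using Submodule.span_induction with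
  | mem x hx => exact Submodule.subset_span ⟨x, hx, rfl⟩
  | zero => simpa using Submodule.zero_mem _
  | add x y _ _ hx hy => rw [star_add]; exact Submodule.add_mem _ hx hy
  | smul c x _ hx =>
      rw [star_smul]
      exact Submodule.smul_mem _ _ hx

lemma sstar_span (A : Set (H →L[ℂ] H)) :
    sstar ((Submodule.span ℂ A : Set (H →L[ℂ] H))) =
      (Submodule.span ℂ (sstar A) : Set (H →L[ℂ] H)) := by
  apply subset_antisymm
  · rintro _ ⟨y, hy, rfl⟩
    exact star_mem_span hy
  · intro y hy
    have h1 := star_mem_span (A := sstar A) hy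
    rw [sstar_sstar] at h1
    exact ⟨star y, h1, star_star y⟩

/-- `star` as a homeomorphism of `B(H)`. -/
def starHomeo : (H →L[ℂ] H) ≃ₜ (H →L[ℂ] H) where
  toFun := star
  invFun := star
  left_inv := star_star
  right_inv := star_star
  continuous_toFun := continuous_star
  continuous_invFun := continuous_star

lemma sstar_eq_preimage (s : Set (H →L[ℂ] H)) : sstar s = star ⁻¹' s := by
  ext x
  constructor
  · rintro ⟨a, ha, rfl⟩
    simpa [star_star] using ha
  · intro h
    exact ⟨star x, h, star_star x⟩

lemma sstar_closure (s : Set (H →L[ℂ] H)) : sstar (closure s) = closure (sstar s) := by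
  rw [sstar_eq_preimage, sstar_eq_preimage]
  exact starHomeo.preimage_closure s

lemma sstar_clspan (A : Set (H →L[ℂ] H)) : sstar (clspan A) = clspan (sstar A) := by
  unfold clspan
  rw [sstar_closure, sstar_span]

lemma sstar_pmul (A B : Set (H →L[ℂ] H)) : sstar (pmul A B) = pmul (sstar B) (sstar A) := by
  ext x
  constructor
  · rintro ⟨_, ⟨a, ha, b, hb, rfl⟩, rfl⟩
    exact ⟨star b, ⟨b, hb, rfl⟩, star a, ⟨a, ha, rfl⟩, (star_mul a b).symm⟩
  · rintro ⟨_, ⟨b, hb, rfl⟩, _, ⟨a, ha, rfl⟩, rfl⟩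
    exact ⟨a * b, ⟨a, ha, b, hb, rfl⟩, (star_mul a b)⟩

lemma pmul_assoc (A B C : Set (H →L[ℂ] H)) :
    pmul (pmul A B) C = pmul A (pmul B C) :=
  Set.image2_assoc mul_assoc

lemma clspan_subset_of_subset {M : Set (H →L[ℂ] H)} (hM : IsTRO M)
    {A : Set (H →L[ℂ] H)} (h : A ⊆ M) : clspan A ⊆ M := by
  let M' : Submodule ℂ (H →L[ℂ] H) :=
    { carrier := M
      zero_mem' := hM.zero_mem
      add_mem' := fun ha hb => hM.add_mem _ ha _ hb
      smul_mem' := fun c x hx => hM.smul_mem c x hx }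
  have h1 : Submodule.span ℂ A ≤ M' := Submodule.span_le.mpr h
  exact closure_minimal h1 hM.isClosed

/-- The key elementary estimate: `t (1 - t/c)^{2n} ≤ c/(2n+1)` on `[0, c]`. -/
lemma poly_bound {c t : ℝ} (hc : 0 < c) (ht0 : 0 ≤ t) (htc : t ≤ c) (n : ℕ) :
    (1 - c⁻¹ * t) ^ n * t * (1 - c⁻¹ * t) ^ n ≤ c / (2 * n + 1) := by
  set s : ℝ := c⁻¹ * t with hs
  have hs0 : 0 ≤ s := mul_nonneg (inv_nonneg.mpr hc.le) ht0
  have hs1 : s ≤ 1 := by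
    rw [hs, inv_mul_le_iff₀ hc]
    linarith
  have hr0 : (0 : ℝ) ≤ 1 - s := by linarith
  have hr1 : 1 - s ≤ 1 := by linarith
  have hts : t = c * s := by
    rw [hs]
    field_simp
  have key : (2 * (n : ℝ) + 1) * (s * (1 - s) ^ (2 * n)) ≤ 1 := by
    have hsum : ∀ k ∈ Finset.range (2 * n + 1), s * (1 - s) ^ (2 * n) ≤ s * (1 - s) ^ k := by
      intro k hk
      have hk' : k ≤ 2 * n := by
        have := Finset.mem_range.mp hk
        omega
      exact mul_le_mul_of_nonneg_left (pow_le_pow_of_le_one hr0 hr1 hk') hs0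
    have h1 := Finset.sum_le_sum hsum
    rw [Finset.sum_const, Finset.card_range, nsmul_eq_mul] at h1
    have h2 : ∑ k ∈ Finset.range (2 * n + 1), s * (1 - s) ^ k
        = 1 - (1 - s) ^ (2 * n + 1) := by
      have hg := geom_sum_mul (1 - s) (2 * n + 1)
      have hsum_eq : ∑ k ∈ Finset.range (2 * n + 1), s * (1 - s) ^ k
          = s * ∑ k ∈ Finset.range (2 * n + 1), (1 - s) ^ k := by
        rw [Finset.mul_sum]
      rw [hsum_eq]
      linear_combination -hg
    have h3 : (0 : ℝ) ≤ (1 - s) ^ (2 * n + 1) := pow_nonneg hr0 _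
    have hcast : ((2 * n + 1 : ℕ) : ℝ) = 2 * (n : ℝ) + 1 := by push_cast; ring
    rw [hcast] at h1
    nlinarith [h1, h2, h3]
  have hden : (0 : ℝ) < 2 * (n : ℝ) + 1 := by positivity
  have h4 : s * (1 - s) ^ (2 * n) ≤ 1 / (2 * (n : ℝ) + 1) := by
    rw [le_div_iff₀ hden]
    linarith [key]
  calc (1 - s) ^ n * t * (1 - s) ^ n
      = c * (s * (1 - s) ^ (2 * n)) := by
        rw [two_mul, pow_add, hts]; ring
    _ ≤ c * (1 / (2 * (n : ℝ) + 1)) := by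
        exact mul_le_mul_of_nonneg_left h4 hc.le
    _ = c / (2 * n + 1) := by ring

set_option maxHeartbeats 1000000 in
/-- Density lemma: for a TRO `M`, the closed span of `M M* M` equals `M`. -/
lemma tro_dense {M : Set (H →L[ℂ] H)} (hM : IsTRO M) :
    clspan (pmul M (pmul (sstar M) M)) = M := by
  apply subset_antisymm
  · apply clspan_subset_of_subset hM
    rintro _ ⟨x, hx, _, ⟨_, ⟨y, hy, rfl⟩, z, hz, rfl⟩, rfl⟩
    show x * (star y * z) ∈ M
    rw [← mul_assoc]
    exact hM.mul_mem x hx y hy z hz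
  · intro x hx
    by_cases hx0 : x = 0
    · subst hx0
      exact subset_closure (Submodule.zero_mem _)
    haveI : Nontrivial (H →L[ℂ] H) := nontrivial_of_ne x 0 hx0
    set a : H →L[ℂ] H := x * star x with ha_def
    have ha_sa : IsSelfAdjoint a := IsSelfAdjoint.mul_star_self x
    have ha_pos : (0 : H →L[ℂ] H) ≤ a := mul_star_self_nonneg x
    have hna : ‖a‖ = ‖x‖ * ‖x‖ := CStarRing.norm_self_mul_star
    have hc : (0 : ℝ) < ‖a‖ := by
      rw [hna]
      have := norm_pos_iff.mpr hx0
      positivity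
    set c : ℝ := ‖a‖ with hc_def
    set d : H →L[ℂ] H := (c⁻¹ : ℝ) • a with hd_def
    have hd_sa : IsSelfAdjoint d := by
      have : star ((c⁻¹ : ℝ) • a) = (c⁻¹ : ℝ) • a := by
        rw [star_smul, ha_sa.star_eq, star_trivial]
      exact this
    set S : Set (H →L[ℂ] H) := pmul M (pmul (sstar M) M) with hS_def
    -- membership claim
    have key : ∀ n : ℕ, ∀ z ∈ M, ((1 - d) ^ n * z ∈ M) ∧
        (z - (1 - d) ^ n * z ∈ Submodule.span ℂ S) := by
      intro n
      induction n with
      | zero =>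
        intro z hz
        simp only [pow_zero, one_mul, sub_self]
        exact ⟨hz, Submodule.zero_mem _⟩
      | succ n ih =>
        intro z hz
        have haz : a * z ∈ M := hM.mul_mem x hx x hx z hz
        have hdz_mem : d * z ∈ M := by
          have h1 := hM.smul_mem ((c⁻¹ : ℝ) : ℂ) _ haz
          rw [Complex.coe_smul] at h1
          rwa [hd_def, smul_mul_assoc]
        have hdz_span : d * z ∈ Submodule.span ℂ S := by
          have hmem : x * (star x * z) ∈ S :=
            ⟨x, hx, star x * z, ⟨star x, ⟨x, hx, rfl⟩, z, hz, rfl⟩, rfl⟩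
          have h1 : a * z ∈ Submodule.span ℂ S := by
            rw [ha_def, mul_assoc]
            exact Submodule.subset_span hmem
          have h2 := Submodule.smul_mem (Submodule.span ℂ S) ((c⁻¹ : ℝ) : ℂ) h1
          rw [Complex.coe_smul] at h2
          rwa [hd_def, smul_mul_assoc]
        have h1z : (1 - d) * z = z - d * z := by
          rw [sub_mul, one_mul]
        have hz' : (1 - d) * z ∈ M := by
          rw [h1z]
          have := hM.smul_mem (-1 : ℂ) _ hdz_mem
          rw [neg_one_smul] at this
          have := hM.add_mem z hz _ this
          rwa [← sub_eq_add_neg] at this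
        obtain ⟨hm, hs⟩ := ih ((1 - d) * z) hz'
        constructor
        · rw [pow_succ, mul_assoc]
          exact hm
        · have heq : z - (1 - d) ^ (n + 1) * z
              = d * z + ((1 - d) * z - (1 - d) ^ n * ((1 - d) * z)) := by
            rw [pow_succ, mul_assoc, h1z]
            abel
          rw [heq]
          exact Submodule.add_mem _ hdz_span hs
    -- norm estimate
    have hbab : ∀ n : ℕ, ‖(1 - d) ^ n * x‖ ^ 2 ≤ c / (2 * n + 1) := by
      intro n
      have hb_sa : IsSelfAdjoint ((1 - d) ^ n) := by
        have h1 : IsSelfAdjoint (1 - d) := by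
          have : star (1 - d) = 1 - d := by rw [star_sub, star_one, hd_sa.star_eq]
          exact this
        exact h1.pow n
      have hsq : ((1 - d) ^ n * x) * star ((1 - d) ^ n * x)
          = (1 - d) ^ n * a * (1 - d) ^ n := by
        rw [star_mul, hb_sa.star_eq, ha_def]
        noncomm_ring
      have hnorm_eq : ‖(1 - d) ^ n * x‖ ^ 2 = ‖(1 - d) ^ n * a * (1 - d) ^ n‖ := by
        rw [sq, ← CStarRing.norm_self_mul_star, hsq]
      rw [hnorm_eq]
      have cfc_eq : cfc (fun t : ℝ => (1 - c⁻¹ * t) ^ n) a = (1 - d) ^ n := by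
        rw [cfc_pow (fun t : ℝ => 1 - c⁻¹ * t) n a, cfc_sub _ _ a,
          cfc_const_mul_id c⁻¹ a, cfc_const 1 a, map_one, hd_def]
      have hbab_eq : (1 - d) ^ n * a * (1 - d) ^ n
          = cfc (fun t : ℝ => (1 - c⁻¹ * t) ^ n * t * (1 - c⁻¹ * t) ^ n) a := by
        conv_rhs => rw [cfc_mul _ _ a, cfc_mul _ _ a, cfc_id' ℝ a]
        rw [cfc_eq]
      rw [hbab_eq]
      apply norm_cfc_le
      · positivity
      · intro t ht
        have ht0 : 0 ≤ t := spectrum_nonneg_of_nonneg ha_pos ht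
        have htc : t ≤ c := by
          have h5 := spectrum.norm_le_norm_of_mem ht
          rw [Real.norm_eq_abs, abs_of_nonneg ht0] at h5
          exact h5
        have h1t : (0 : ℝ) ≤ 1 - c⁻¹ * t := by
          have : c⁻¹ * t ≤ 1 := by
            rw [inv_mul_le_iff₀ hc]
            linarith
          linarith
        have hval : (0 : ℝ) ≤ (1 - c⁻¹ * t) ^ n * t * (1 - c⁻¹ * t) ^ n :=
          mul_nonneg (mul_nonneg (pow_nonneg h1t n) ht0) (pow_nonneg h1t n)
        rw [Real.norm_eq_abs, abs_of_nonneg hval]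
        exact poly_bound hc ht0 htc n
    -- conclusion
    show x ∈ closure (Submodule.span ℂ S : Set (H →L[ℂ] H))
    rw [Metric.mem_closure_iff]
    intro ε hε
    obtain ⟨n, hn⟩ := exists_nat_gt (c / ε ^ 2)
    refine ⟨x - (1 - d) ^ n * x, (key n x hx).2, ?_⟩
    rw [dist_eq_norm]
    have heq2 : x - (x - (1 - d) ^ n * x) = (1 - d) ^ n * x := by abel
    rw [heq2]
    have h1 := hbab n
    have hε2 : (0 : ℝ) < ε ^ 2 := by positivity
    have h2 : c / (2 * (n : ℝ) + 1) < ε ^ 2 := by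
      rw [div_lt_iff₀ (by positivity)]
      have h6 : c < (n : ℝ) * ε ^ 2 := by
        rw [div_lt_iff₀ hε2] at hn
        linarith
      nlinarith [hε2, Nat.cast_nonneg (α := ℝ) n]
    have h3 : ‖(1 - d) ^ n * x‖ ^ 2 < ε ^ 2 := lt_of_le_of_lt h1 h2
    exact lt_of_pow_lt_pow_left₀ 2 hε.le h3

end TROAux

/-- If `cl-span(M* u) = cl-span(M* M)` and `cl-span(u M*) = cl-span(M M*)`, then
`cl-span(u u* M) = M`. -/
theorem stmt0 {M : Set (H →L[ℂ] H)} (hM : IsTRO M) (u : H →L[ℂ] H)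
    (h1 : clspan (pmul (sstar M) {u}) = clspan (pmul (sstar M) M))
    (h2 : clspan (pmul {u} (sstar M)) = clspan (pmul M (sstar M))) :
    clspan (pmul {u * star u} M) = M := by
  open TROAux in
  have hsu : sstar ({u} : Set (H →L[ℂ] H)) = {star u} := Set.image_singleton
  have h1' : clspan (pmul {star u} M) = clspan (pmul (sstar M) M) := by
    have h3 := congrArg sstar h1
    rw [TROAux.sstar_clspan, TROAux.sstar_clspan, TROAux.sstar_pmul, TROAux.sstar_pmul,
      TROAux.sstar_sstar, hsu] at h3
    exact h3
  have hsingle : (pmul {u * star u} M : Set (H →L[ℂ] H))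
      = pmul {u} (pmul {star u} M) := by
    have hss : (pmul {u} {star u} : Set (H →L[ℂ] H)) = {u * star u} :=
      Set.image2_singleton
    rw [← TROAux.pmul_assoc, hss]
  calc clspan (pmul {u * star u} M)
      = clspan (pmul {u} (pmul {star u} M)) := by rw [hsingle]
    _ = clspan (pmul {u} (clspan (pmul {star u} M))) :=
        (TROAux.clspan_pmul_clspan_right _ _).symm
    _ = clspan (pmul {u} (clspan (pmul (sstar M) M))) := by rw [h1']
    _ = clspan (pmul {u} (pmul (sstar M) M)) := TROAux.clspan_pmul_clspan_right _ _
    _ = clspan (pmul (pmul {u} (sstar M)) M) := by rw [TROAux.pmul_assoc]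
    _ = clspan (pmul (clspan (pmul {u} (sstar M))) M) :=
        (TROAux.clspan_pmul_clspan_left _ _).symm
    _ = clspan (pmul (clspan (pmul M (sstar M))) M) := by rw [h2]
    _ = clspan (pmul (pmul M (sstar M)) M) := TROAux.clspan_pmul_clspan_left _ _
    _ = clspan (pmul M (pmul (sstar M) M)) := by rw [TROAux.pmul_assoc]
    _ = M := TROAux.tro_dense hM
end
end

section
/- Let M be a TRO in B(H) and u ∈ B(H). If the closed linear span of M*u equals that of M*M and the closed linear span of uu*M equals M, then the closed linear span of uM* equals that of MM*. -/
noncomputable section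

set_option linter.unusedSectionVars false

variable {H : Type*} [NormedAddCommGroup H] [InnerProductSpace ℂ H] [CompleteSpace H]

/- ### Auxiliary lemmas -/

lemma clspan_mono {A B : Set (H →L[ℂ] H)} (h : A ⊆ B) : clspan A ⊆ clspan B :=
  closure_mono (Submodule.span_mono h)

lemma subset_clspan (A : Set (H →L[ℂ] H)) : A ⊆ clspan A :=
  (Submodule.subset_span).trans subset_closure

lemma clspan_subset {A : Set (H →L[ℂ] H)} {N : Submodule ℂ (H →L[ℂ] H)}
    (hc : IsClosed (N : Set (H →L[ℂ] H))) (h : A ⊆ N) : clspan A ⊆ N :=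
  closure_minimal (Submodule.span_le.2 h) hc

lemma clspan_clspan (A : Set (H →L[ℂ] H)) : clspan (clspan A) = clspan A :=
  Set.Subset.antisymm
    (clspan_subset (Submodule.isClosed_topologicalClosure _) subset_rfl)
    (clspan_mono (subset_clspan A))

lemma clspan_le {A B : Set (H →L[ℂ] H)} (h : A ⊆ clspan B) : clspan A ⊆ clspan B := by
  rw [← clspan_clspan B]; exact clspan_mono h

lemma pmul_assoc (A B C : Set (H →L[ℂ] H)) : pmul (pmul A B) C = pmul A (pmul B C) :=
  Set.image2_assoc mul_assoc

lemma pmul_mono {A A' B B' : Set (H →L[ℂ] H)} (h1 : A ⊆ A') (h2 : B ⊆ B') :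
    pmul A B ⊆ pmul A' B' := Set.image2_subset h1 h2

lemma sstar_sstar (A : Set (H →L[ℂ] H)) : sstar (sstar A) = A := by
  simp [sstar, Set.image_image]

lemma sstar_pmul (A B : Set (H →L[ℂ] H)) : sstar (pmul A B) = pmul (sstar B) (sstar A) := by
  simp only [sstar, pmul, Set.image_image2, Set.image2_image_left, Set.image2_image_right,
    star_mul]
  exact Set.image2_swap _ A B

lemma sstar_singleton (a : H →L[ℂ] H) : sstar {a} = {star a} := Set.image_singleton

lemma pmul_singleton (a b : H →L[ℂ] H) : pmul {a} {b} = {a * b} := by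
  simp [pmul]

lemma span_sstar (A : Set (H →L[ℂ] H)) :
    (Submodule.span ℂ (sstar A) : Set (H →L[ℂ] H)) = star '' (Submodule.span ℂ A) := by
  apply Set.Subset.antisymm
  · intro x hx
    induction hx using Submodule.span_induction with
    | mem x hx =>
      obtain ⟨a, ha, rfl⟩ := hx
      exact ⟨a, Submodule.subset_span ha, rfl⟩
    | zero => exact ⟨0, Submodule.zero_mem _, star_zero _⟩
    | add x y _ _ hx hy =>
      obtain ⟨a, ha, rfl⟩ := hx; obtain ⟨b, hb, rfl⟩ := hy
      exact ⟨a + b, Submodule.add_mem _ ha hb, star_add _ _⟩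
    | smul c x _ hx =>
      obtain ⟨a, ha, rfl⟩ := hx
      exact ⟨(starRingEnd ℂ) c • a, Submodule.smul_mem _ _ ha, by simp [star_smul]⟩
  · rintro _ ⟨a, ha, rfl⟩
    induction ha using Submodule.span_induction with
    | mem x hx => exact Submodule.subset_span ⟨x, hx, rfl⟩
    | zero => simpa using Submodule.zero_mem (Submodule.span ℂ (sstar A))
    | add x y _ _ hx hy => simpa [star_add] using Submodule.add_mem _ hx hy
    | smul c x _ hx => simpa [star_smul] using
        Submodule.smul_mem (Submodule.span ℂ (sstar A)) ((starRingEnd ℂ) c) hx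

lemma star_image_closure (S : Set (H →L[ℂ] H)) :
    star '' closure S = closure (star '' S) := by
  apply Set.Subset.antisymm
  · exact (continuous_star.continuousOn.image_closure (s := S)).trans
      (closure_mono (Set.image_mono subset_rfl))
  · intro x hx
    have h2 : star x ∈ closure (star '' (star '' S)) :=
      (continuous_star.continuousOn.image_closure (s := star '' S)) ⟨x, hx, rfl⟩
    have h3 : star x ∈ closure S := by simpa [Set.image_image] using h2
    exact ⟨star x, h3, star_star x⟩

lemma clspan_sstar (A : Set (H →L[ℂ] H)) : clspan (sstar A) = sstar (clspan A) := by
  unfold clspan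
  rw [span_sstar, ← star_image_closure]
  rfl

lemma pmul_clspan_right_subset (A B : Set (H →L[ℂ] H)) :
    pmul A (clspan B) ⊆ clspan (pmul A B) := by
  rintro _ ⟨a, ha, b, hb, rfl⟩
  have hmaps : (a * ·) '' (Submodule.span ℂ B) ⊆ (Submodule.span ℂ (pmul A B) : Set _) := by
    rintro _ ⟨x, hx, rfl⟩
    induction hx using Submodule.span_induction with
    | mem y hy => exact Submodule.subset_span ⟨a, ha, y, hy, rfl⟩
    | zero => simpa using Submodule.zero_mem (Submodule.span ℂ (pmul A B))
    | add y z _ _ hy hz => simpa [mul_add] using Submodule.add_mem _ hy hz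
    | smul c y _ hy => simpa [mul_smul_comm] using Submodule.smul_mem _ c hy
  have hcont : Continuous (a * · : (H →L[ℂ] H) → _) := continuous_const.mul continuous_id
  have h1 : a * b ∈ (a * ·) '' closure (Submodule.span ℂ B : Set _) := ⟨b, hb, rfl⟩
  have h2 := hcont.continuousOn.image_closure (s := (Submodule.span ℂ B : Set _)) h1
  exact closure_mono hmaps (closure_mono (Set.image_mono subset_rfl) h2)

lemma pmul_clspan_left_subset (A B : Set (H →L[ℂ] H)) :
    pmul (clspan A) B ⊆ clspan (pmul A B) := by
  rintro _ ⟨a, ha, b, hb, rfl⟩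
  have hmaps : (· * b) '' (Submodule.span ℂ A) ⊆ (Submodule.span ℂ (pmul A B) : Set _) := by
    rintro _ ⟨x, hx, rfl⟩
    induction hx using Submodule.span_induction with
    | mem y hy => exact Submodule.subset_span ⟨y, hy, b, hb, rfl⟩
    | zero => simpa using Submodule.zero_mem (Submodule.span ℂ (pmul A B))
    | add y z _ _ hy hz => simpa [add_mul] using Submodule.add_mem _ hy hz
    | smul c y _ hy => simpa [smul_mul_assoc] using Submodule.smul_mem _ c hy
  have hcont : Continuous (· * b : (H →L[ℂ] H) → _) := continuous_id.mul continuous_const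
  have h1 : a * b ∈ (· * b) '' closure (Submodule.span ℂ A : Set _) := ⟨a, ha, rfl⟩
  have h2 := hcont.continuousOn.image_closure (s := (Submodule.span ℂ A : Set _)) h1
  exact closure_mono hmaps (closure_mono (Set.image_mono subset_rfl) h2)

lemma clspan_pmul_clspan_right (A B : Set (H →L[ℂ] H)) :
    clspan (pmul A (clspan B)) = clspan (pmul A B) :=
  Set.Subset.antisymm (clspan_le (pmul_clspan_right_subset A B))
    (clspan_mono (Set.image2_subset subset_rfl (subset_clspan B)))

lemma clspan_pmul_clspan_left (A B : Set (H →L[ℂ] H)) :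
    clspan (pmul (clspan A) B) = clspan (pmul A B) :=
  Set.Subset.antisymm (clspan_le (pmul_clspan_left_subset A B))
    (clspan_mono (Set.image2_subset (subset_clspan A) subset_rfl))

lemma clspan_pmul_congr_right {B B' : Set (H →L[ℂ] H)} (A : Set (H →L[ℂ] H))
    (h : clspan B = clspan B') : clspan (pmul A B) = clspan (pmul A B') := by
  rw [← clspan_pmul_clspan_right A B, h, clspan_pmul_clspan_right]

lemma clspan_pmul_congr_left {A A' : Set (H →L[ℂ] H)} (B : Set (H →L[ℂ] H))
    (h : clspan A = clspan A') : clspan (pmul A B) = clspan (pmul A' B) := by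
  rw [← clspan_pmul_clspan_left A B, h, clspan_pmul_clspan_left]

/-- The submodule underlying a TRO. -/
def IsTRO.submodule {M : Set (H →L[ℂ] H)} (hM : IsTRO M) : Submodule ℂ (H →L[ℂ] H) where
  carrier := M
  zero_mem' := hM.zero_mem
  add_mem' := fun hx hy => hM.add_mem _ hx _ hy
  smul_mem' := fun c _ hx => hM.smul_mem c _ hx

lemma IsTRO.clspan_eq {M : Set (H →L[ℂ] H)} (hM : IsTRO M) : clspan M = M :=
  Set.Subset.antisymm
    (clspan_subset (N := hM.submodule) hM.isClosed subset_rfl)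
    (subset_clspan M)

/-- If `cl-span(M* u) = cl-span(M* M)` and `cl-span(u u* M) = M`, then
`cl-span(u M*) = cl-span(M M*)`. -/
theorem stmt2 {M : Set (H →L[ℂ] H)} (hM : IsTRO M) (u : H →L[ℂ] H)
    (h1 : clspan (pmul (sstar M) {u}) = clspan (pmul (sstar M) M))
    (h3 : clspan (pmul {u * star u} M) = M) :
    clspan (pmul {u} (sstar M)) = clspan (pmul M (sstar M)) := by
  have mcl : clspan M = M := hM.clspan_eq
  -- starred version of h1 : cl-span(u* M) = cl-span(M* M)
  have h1s : clspan (pmul {star u} M) = clspan (pmul (sstar M) M) := by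
    have := congrArg sstar h1
    rw [← clspan_sstar, ← clspan_sstar, sstar_pmul, sstar_pmul, sstar_singleton,
      sstar_sstar] at this
    exact this
  -- key fact (b) : cl-span(u M* M) = M
  have hb : clspan (pmul {u} (pmul (sstar M) M)) = M := by
    calc clspan (pmul {u} (pmul (sstar M) M))
        = clspan (pmul {u} (pmul {star u} M)) := clspan_pmul_congr_right _ h1s.symm
      _ = clspan (pmul (pmul {u} {star u}) M) := by rw [pmul_assoc]
      _ = clspan (pmul {u * star u} M) := by rw [pmul_singleton]
      _ = M := h3
  -- (c) : u M* u ⊆ M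
  have hc : pmul (pmul {u} (sstar M)) {u} ⊆ M := by
    have hcc : clspan (pmul (pmul {u} (sstar M)) {u}) = M := by
      rw [pmul_assoc]
      calc clspan (pmul {u} (pmul (sstar M) {u}))
          = clspan (pmul {u} (pmul (sstar M) M)) := clspan_pmul_congr_right _ h1
        _ = M := hb
    have h5 := subset_clspan (pmul (pmul {u} (sstar M)) {u})
    rw [hcc] at h5
    exact h5
  -- M M* M ⊆ M
  have htro : pmul (pmul M (sstar M)) M ⊆ M := by
    rintro _ ⟨_, ⟨x, hx, _, ⟨y, hy, rfl⟩, rfl⟩, z, hz, rfl⟩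
    exact hM.mul_mem x hx y hy z hz
  -- (d) : cl-span(M M* M) = M
  have hd : clspan (pmul (pmul M (sstar M)) M) = M := by
    apply Set.Subset.antisymm
    · exact clspan_subset (N := hM.submodule) hM.isClosed htro
    · have e1 : M = clspan (pmul (pmul {u} (sstar M)) M) := by
        rw [pmul_assoc]; exact hb.symm
      have e2 : clspan (pmul (pmul {u} (sstar M)) M)
          = clspan (pmul (pmul {u} (sstar M)) (pmul {u} (pmul (sstar M) M))) :=
        clspan_pmul_congr_right _ (mcl.trans hb.symm)
      have e3 : pmul (pmul {u} (sstar M)) (pmul {u} (pmul (sstar M) M))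
          = pmul (pmul (pmul (pmul {u} (sstar M)) {u}) (sstar M)) M := by
        simp only [pmul_assoc]
      have e4 : pmul (pmul (pmul (pmul {u} (sstar M)) {u}) (sstar M)) M
          ⊆ pmul (pmul M (sstar M)) M :=
        pmul_mono (pmul_mono hc subset_rfl) subset_rfl
      calc M = clspan (pmul (pmul {u} (sstar M)) (pmul {u} (pmul (sstar M) M))) :=
              e1.trans e2
        _ ⊆ clspan (pmul (pmul M (sstar M)) M) := by rw [e3]; exact clspan_mono e4
  -- (e) : cl-span(M* M M*) = M*
  have he : clspan (pmul (sstar M) (pmul M (sstar M))) = sstar M := by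
    have := congrArg sstar hd
    rw [← clspan_sstar, sstar_pmul, sstar_pmul, sstar_sstar] at this
    exact this
  -- cl-span(M*) = M*
  have hsM : clspan (sstar M) = sstar M := by
    rw [clspan_sstar, mcl]
  -- final chain
  calc clspan (pmul {u} (sstar M))
      = clspan (pmul {u} (pmul (sstar M) (pmul M (sstar M)))) :=
        clspan_pmul_congr_right _ (hsM.trans he.symm)
    _ = clspan (pmul (pmul {u} (pmul (sstar M) M)) (sstar M)) := by
        rw [pmul_assoc, ← pmul_assoc (sstar M) M (sstar M)]
    _ = clspan (pmul M (sstar M)) :=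
        clspan_pmul_congr_left _ (hb.trans mcl.symm)
end
end

section
/- Let M be a TRO in B(H) and let u ∈ B(H) be strictly associated to M, i.e. associated to M and additionally the closure of uH equals the closure of MH and the closure of u*H equals the closure of M*H. Then u lies in the weak operator closure of M in B(H). -/
noncomputable section

variable {H : Type*} [NormedAddCommGroup H] [InnerProductSpace ℂ H] [CompleteSpace H]

/-- left multiplication by `m ∈ M` maps `cl-span(M* M)` into `M`. -/
lemma IsTRO.mul_clspan_mem {M : Set (H →L[ℂ] H)} (hM : IsTRO M) {m : H →L[ℂ] H} (hm : m ∈ M)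
    {x : H →L[ℂ] H} (hx : x ∈ clspan (pmul (sstar M) M)) : m * x ∈ M := by
  have hclosed : IsClosed {y : H →L[ℂ] H | m * y ∈ M} :=
    hM.isClosed.preimage (continuous_mul_left m)
  have hspan : (Submodule.span ℂ (pmul (sstar M) M) : Set (H →L[ℂ] H)) ⊆
      {y : H →L[ℂ] H | m * y ∈ M} := by
    intro y hy
    induction hy using Submodule.span_induction with
    | mem z hz =>
      obtain ⟨_, ⟨a, ha, rfl⟩, b, hb, rfl⟩ := hz
      show m * (star a * b) ∈ M
      rw [← mul_assoc]
      exact hM.mul_mem _ hm _ ha _ hb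
    | zero => show m * 0 ∈ M; simpa using hM.zero_mem
    | add y z _ _ hy hz => show m * (y + z) ∈ M; rw [mul_add]; exact hM.add_mem _ hy _ hz
    | smul c y _ hy => show m * (c • y) ∈ M; rw [mul_smul_comm]; exact hM.smul_mem c _ hy
  exact closure_minimal hspan hclosed hx

/-- if `cl-span(M* u) = cl-span(M* M)` then `cl-span(M M*) · u ⊆ M`. -/
lemma IsTRO.clspan_mul_u_mem {M : Set (H →L[ℂ] H)} (hM : IsTRO M) {u : H →L[ℂ] H}
    (h1 : clspan (pmul (sstar M) {u}) = clspan (pmul (sstar M) M))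
    {x : H →L[ℂ] H} (hx : x ∈ clspan (pmul M (sstar M))) : x * u ∈ M := by
  have hclosed : IsClosed {y : H →L[ℂ] H | y * u ∈ M} :=
    hM.isClosed.preimage (continuous_mul_right u)
  have hspan : (Submodule.span ℂ (pmul M (sstar M)) : Set (H →L[ℂ] H)) ⊆
      {y : H →L[ℂ] H | y * u ∈ M} := by
    intro y hy
    induction hy using Submodule.span_induction with
    | mem z hz =>
      obtain ⟨a, ha, _, ⟨b, hb, rfl⟩, rfl⟩ := hz
      show (a * star b) * u ∈ M
      rw [mul_assoc]
      refine hM.mul_clspan_mem ha ?_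
      rw [← h1]
      exact subset_closure (Submodule.subset_span ⟨star b, ⟨b, hb, rfl⟩, u, rfl, rfl⟩)
    | zero => show (0 : H →L[ℂ] H) * u ∈ M; simpa using hM.zero_mem
    | add y z _ _ hy hz => show (y + z) * u ∈ M; rw [add_mul]; exact hM.add_mem _ hy _ hz
    | smul c y _ hy => show (c • y) * u ∈ M; rw [smul_mul_assoc]; exact hM.smul_mem c _ hy
  exact closure_minimal hspan hclosed hx

/-- `span(M M*)` is closed under multiplication. -/
lemma IsTRO.span_mul_span {M : Set (H →L[ℂ] H)} (hM : IsTRO M) :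
    ∀ y ∈ Submodule.span ℂ (pmul M (sstar M)), ∀ v ∈ Submodule.span ℂ (pmul M (sstar M)),
      v * y ∈ Submodule.span ℂ (pmul M (sstar M)) := by
  intro y hy
  induction hy using Submodule.span_induction with
  | mem z hz =>
    obtain ⟨a, ha, _, ⟨b, hb, rfl⟩, rfl⟩ := hz
    intro v hv
    induction hv using Submodule.span_induction with
    | mem w hw =>
      obtain ⟨a', ha', _, ⟨b', hb', rfl⟩, rfl⟩ := hw
      refine Submodule.subset_span ⟨a' * star b' * a, hM.mul_mem _ ha' _ hb' _ ha,
        star b, ⟨b, hb, rfl⟩, ?_⟩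
      simp only []
      simp [mul_assoc]
    | zero => simpa using Submodule.zero_mem _
    | add v w _ _ hv hw => rw [add_mul]; exact Submodule.add_mem _ hv hw
    | smul c v _ hv => rw [smul_mul_assoc]; exact Submodule.smul_mem _ c hv
  | zero => intro v _; simpa using Submodule.zero_mem _
  | add y z _ _ hy hz => intro v hv; rw [mul_add]; exact Submodule.add_mem _ (hy v hv) (hz v hv)
  | smul c y _ hy => intro v hv; rw [mul_smul_comm]; exact Submodule.smul_mem _ c (hy v hv)

/-- The set `A·H` of all vectors `x ξ` with `x ∈ A`, `ξ ∈ H`. -/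
def appSet (A : Set (H →L[ℂ] H)) : Set H := {v | ∃ x ∈ A, ∃ ξ : H, v = x ξ}

set_option maxHeartbeats 4000000 in
/-- Key approximation: `u` can be approximated in the strong operator topology on finitely many
vectors by elements of `M`. -/
lemma IsTRO.key {M : Set (H →L[ℂ] H)} (hM : IsTRO M) (u : H →L[ℂ] H)
    (h1 : clspan (pmul (sstar M) {u}) = clspan (pmul (sstar M) M))
    (hs1 : closure (Set.range u) = closure (appSet M)) (s : Finset H) {ε : ℝ} (hε : 0 < ε) :
    ∃ m ∈ M, ∀ ξ ∈ s, ‖u ξ - m ξ‖ < ε := by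
  classical
  -- approximate each `u ξ` by an element `mf ξ (ζf ξ)` of `M H`
  have happrox : ∀ ξ ∈ s, ∃ m ζ, m ∈ M ∧ ‖u ξ - m ζ‖ < ε / 3 := by
    intro ξ _
    have h₁ : u ξ ∈ closure (appSet M) := by
      rw [← hs1]; exact subset_closure ⟨ξ, rfl⟩
    rcases Metric.mem_closure_iff.mp h₁ (ε / 3) (by positivity) with ⟨v, hv, hdist⟩
    obtain ⟨m, hm, ζ, rfl⟩ := hv
    exact ⟨m, ζ, hm, by rwa [dist_eq_norm] at hdist⟩
  choose! mf ζf hmf hef using happrox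
  set C : ℝ := ∑ ξ ∈ s, ‖ζf ξ‖ with hCdef
  have hC0 : 0 ≤ C := Finset.sum_nonneg fun _ _ => norm_nonneg _
  have hCle : ∀ ξ ∈ s, ‖ζf ξ‖ ≤ C := fun ξ hξ =>
    Finset.single_le_sum (fun _ _ => norm_nonneg _) hξ
  obtain ⟨n, hn⟩ := exists_nat_gt (18 * C ^ 2 / ε ^ 2 + 1)
  have hn0 : (0 : ℝ) < n := lt_of_le_of_lt (by positivity) hn
  have hn1 : 18 * C ^ 2 < (n : ℝ) * ε ^ 2 := by
    have h' : 18 * C ^ 2 / ε ^ 2 < (n : ℝ) := by linarith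
    calc 18 * C ^ 2 = 18 * C ^ 2 / ε ^ 2 * ε ^ 2 := by field_simp
    _ < (n : ℝ) * ε ^ 2 := by exact mul_lt_mul_of_pos_right h' (by positivity)
  -- the positive element `b` and its scaling `β`
  set b : H →L[ℂ] H := ∑ ξ ∈ s, mf ξ * star (mf ξ) with hbdef
  have hb0 : (0 : H →L[ℂ] H) ≤ b := Finset.sum_nonneg fun ξ _ => mul_star_self_nonneg _
  have hble : ∀ ξ ∈ s, mf ξ * star (mf ξ) ≤ b := fun ξ hξ =>
    Finset.single_le_sum (fun ξ _ => mul_star_self_nonneg (mf ξ)) hξ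
  have hbV' : b ∈ Submodule.span ℂ (pmul M (sstar M)) := by
    rw [hbdef]
    refine Submodule.sum_mem _ fun ξ hξ => Submodule.subset_span ?_
    exact ⟨mf ξ, hmf ξ hξ, star (mf ξ), ⟨mf ξ, hmf ξ hξ, rfl⟩, rfl⟩
  clear_value b
  set β : H →L[ℂ] H := ((n : ℕ) : ℂ) • b with hβdef
  clear_value β
  have hβnsmul : β = n • b := by rw [hβdef, Nat.cast_smul_eq_nsmul]
  have hns : ∀ k : ℕ, (0 : H →L[ℂ] H) ≤ k • b := by
    intro k
    induction k with
    | zero => simp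
    | succ k ih => rw [succ_nsmul]; exact add_nonneg ih hb0
  have hβ0 : (0 : H →L[ℂ] H) ≤ β := by rw [hβnsmul]; exact hns n
  have hβsa : IsSelfAdjoint β := .of_nonneg hβ0
  set c : ℝ := ‖β‖ with hcdef
  have hc0 : 0 ≤ c := norm_nonneg β
  have hc1 : (0 : ℝ) < 1 + c := by linarith
  have hcc : ((1 + c : ℝ) : ℂ) ≠ 0 := by
    simp only [ne_eq, Complex.ofReal_eq_zero]; positivity
  -- `x = c•1 - β`, `w = (1+c)⁻¹ • x`
  set x : H →L[ℂ] H := ((c : ℂ)) • 1 - β with hxdef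
  clear_value x
  have halg : algebraMap ℝ (H →L[ℂ] H) c = ((c : ℂ)) • 1 := by
    rw [IsScalarTower.algebraMap_apply ℝ ℂ, Algebra.algebraMap_eq_smul_one]; norm_num
  have hx0 : (0 : H →L[ℂ] H) ≤ x := by
    rw [hxdef, ← halg]
    exact sub_nonneg.mpr hβsa.le_algebraMap_norm_self
  have hxle : x ≤ ((c : ℂ)) • 1 := by rw [hxdef]; exact sub_le_self _ hβ0
  have hxnorm : ‖x‖ ≤ c := by
    refine (CStarAlgebra.norm_le_norm_of_nonneg_of_le hx0 hxle).trans ?_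
    calc ‖((c : ℂ)) • (1 : H →L[ℂ] H)‖ = ‖((c : ℂ))‖ * ‖(1 : H →L[ℂ] H)‖ := norm_smul _ _
    _ ≤ c * 1 := by
        refine mul_le_mul ?_ ContinuousLinearMap.norm_id_le (norm_nonneg _) hc0
        simp [Complex.norm_real, abs_of_nonneg hc0]
    _ = c := mul_one c
  set w : H →L[ℂ] H := ((1 + c : ℝ) : ℂ)⁻¹ • x with hwdef
  clear_value w
  have hnc : ‖((1 + c : ℝ) : ℂ)‖ = 1 + c := by
    rw [Complex.norm_real]; exact abs_of_pos hc1
  have hwnorm' : ‖w‖ ≤ c / (1 + c) := by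
    rw [hwdef, norm_smul, norm_inv, hnc, div_eq_inv_mul]
    exact mul_le_mul_of_nonneg_left hxnorm (by positivity)
  have hwnorm : ‖w‖ < 1 := by
    refine hwnorm'.trans_lt ?_
    rw [div_lt_one hc1]; linarith
  -- the geometric series and the inverse `R`
  have hS : Summable (fun k : ℕ => w ^ k) := summable_geometric_of_norm_lt_one hwnorm
  set S : H →L[ℂ] H := ∑' k : ℕ, w ^ k with hSdef
  have hSsum : HasSum (fun k : ℕ => w ^ k) S := hS.hasSum
  have hgm : (1 - w) * S = 1 := mul_neg_geom_series w hwnorm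
  have hmg : S * (1 - w) = 1 := geom_series_mul_neg w hwnorm
  clear_value S
  set R : H →L[ℂ] H := ((1 + c : ℝ) : ℂ)⁻¹ • S with hRdef
  clear_value R
  have hT : (1 + β : H →L[ℂ] H) = ((1 + c : ℝ) : ℂ) • (1 - w) := by
    rw [hwdef, smul_sub, smul_smul, mul_inv_cancel₀ hcc, one_smul, hxdef]
    push_cast
    rw [add_smul, one_smul]
    abel
  have hTR : (1 + β) * R = 1 := by
    rw [hT, hRdef, smul_mul_smul_comm, mul_inv_cancel₀ hcc, one_smul, hgm]
  have hRT : R * (1 + β) = 1 := by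
    rw [hT, hRdef, smul_mul_smul_comm, inv_mul_cancel₀ hcc, one_smul, hmg]
  have hTsa : star (1 + β : H →L[ℂ] H) = 1 + β := by rw [star_add, star_one, hβsa.star_eq]
  have hRsa : star R = R := by
    have hsRT : star R * (1 + β) = 1 := by
      calc star R * (1 + β) = star (star (1 + β) * R) := by rw [star_mul, star_star]
      _ = star ((1 + β) * R) := by rw [hTsa]
      _ = 1 := by rw [hTR, star_one]
    calc star R = star R * ((1 + β) * R) := by rw [hTR, mul_one]
    _ = (star R * (1 + β)) * R := by rw [mul_assoc]
    _ = R := by rw [hsRT, one_mul]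
  -- norm bound `‖R‖ ≤ 1`
  have hwk : ∀ k : ℕ, ‖w ^ k‖ ≤ ‖w‖ ^ k := by
    intro k
    rcases Nat.eq_zero_or_pos k with h | h
    · subst h; rw [pow_zero, pow_zero]; exact ContinuousLinearMap.norm_id_le
    · exact norm_pow_le' w h
  have hsum2 : Summable (fun k : ℕ => ‖w‖ ^ k) :=
    summable_geometric_of_lt_one (norm_nonneg w) hwnorm
  have hSnorm : ‖S‖ ≤ (1 - ‖w‖)⁻¹ := by
    have hsum1 : Summable (fun k : ℕ => ‖w ^ k‖) := hsum2.of_nonneg_of_le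
      (fun _ => norm_nonneg _) hwk
    rw [hSdef]
    calc ‖∑' k : ℕ, w ^ k‖ ≤ ∑' k : ℕ, ‖w ^ k‖ := norm_tsum_le_tsum_norm hsum1
    _ ≤ ∑' k : ℕ, ‖w‖ ^ k := Summable.tsum_le_tsum hwk hsum1 hsum2
    _ = (1 - ‖w‖)⁻¹ := tsum_geometric_of_lt_one (norm_nonneg w) hwnorm
  have hinv : (1 - ‖w‖)⁻¹ ≤ 1 + c := by
    have h' : (1 + c)⁻¹ ≤ 1 - ‖w‖ := by
      have : c / (1 + c) + (1 + c)⁻¹ = 1 := by field_simp; ring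
      linarith [hwnorm']
    calc (1 - ‖w‖)⁻¹ ≤ ((1 + c)⁻¹)⁻¹ :=
      inv_anti₀ (by positivity) h'
    _ = 1 + c := inv_inv _
  have hRnorm : ‖R‖ ≤ 1 := by
    rw [hRdef, norm_smul, norm_inv]
    rw [hnc]
    calc (1 + c)⁻¹ * ‖S‖ ≤ (1 + c)⁻¹ * (1 + c) :=
      mul_le_mul_of_nonneg_left (hSnorm.trans hinv) (by positivity)
    _ = 1 := inv_mul_cancel₀ (by positivity)
  -- `β * R = 1 - R`
  have hβR : β * R = 1 - R := by
    have h' := hTR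
    rw [add_mul, one_mul] at h'
    rw [eq_sub_iff_add_eq, add_comm]
    exact h'
  have hnne : ((n : ℕ) : ℂ) ≠ 0 := by
    simp only [ne_eq, Nat.cast_eq_zero]
    exact_mod_cast (by exact_mod_cast hn0.ne' : (n : ℝ) ≠ 0)
  have hbR : b * R = ((n : ℕ) : ℂ)⁻¹ • (1 - R) := by
    rw [← hβR, hβdef, smul_mul_assoc, smul_smul, inv_mul_cancel₀ hnne, one_smul]
  have hRbR : R * b * R = ((n : ℕ) : ℂ)⁻¹ • (R - R * R) := by
    rw [mul_assoc, hbR, mul_smul_comm, mul_sub, mul_one]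
  have hRbRnorm : ‖R * b * R‖ ≤ 2 / n := by
    have h2' : ‖R - R * R‖ ≤ 2 := by
      have h3' := norm_sub_le R (R * R)
      have h4' := norm_mul_le R R
      have h5' : ‖R‖ * ‖R‖ ≤ 1 * 1 :=
        mul_le_mul hRnorm hRnorm (norm_nonneg _) zero_le_one
      linarith
    have h1' : ‖((n : ℕ) : ℂ)‖ = (n : ℝ) := by simp
    rw [hRbR, norm_smul, norm_inv, h1', div_eq_inv_mul]
    exact mul_le_mul_of_nonneg_left h2' (by positivity)
  -- the per-vector estimate
  have hRm : ∀ ξ ∈ s, ‖R * mf ξ‖ * ‖ζf ξ‖ < ε / 3 := by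
    intro ξ hξ
    have e1 : ‖R * mf ξ‖ ^ 2 = ‖R * (mf ξ * star (mf ξ)) * R‖ := by
      rw [sq, ← CStarRing.norm_self_mul_star]
      congr 1
      rw [star_mul, hRsa]
      simp [mul_assoc]
    have e2 : R * (mf ξ * star (mf ξ)) * R ≤ R * b * R := by
      have h' := star_left_conjugate_le_conjugate (hble ξ hξ) R
      rwa [hRsa] at h'
    have e3 : (0 : H →L[ℂ] H) ≤ R * (mf ξ * star (mf ξ)) * R := by
      have h' := star_left_conjugate_nonneg (mul_star_self_nonneg (mf ξ)) R
      rwa [hRsa] at h'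
    have e4 : ‖R * mf ξ‖ ^ 2 ≤ 2 / n := by
      rw [e1]
      exact (CStarAlgebra.norm_le_norm_of_nonneg_of_le e3 e2).trans hRbRnorm
    have e5 : (‖R * mf ξ‖ * ‖ζf ξ‖) ^ 2 < (ε / 3) ^ 2 := by
      have hz := hCle ξ hξ
      have hz0 : (0 : ℝ) ≤ ‖ζf ξ‖ := norm_nonneg _
      have e6 : (‖R * mf ξ‖ * ‖ζf ξ‖) ^ 2 ≤ 2 / n * C ^ 2 := by
        rw [mul_pow]
        calc ‖R * mf ξ‖ ^ 2 * ‖ζf ξ‖ ^ 2 ≤ (2 / n) * ‖ζf ξ‖ ^ 2 :=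
          mul_le_mul_of_nonneg_right e4 (by positivity)
        _ ≤ (2 / n) * C ^ 2 := by
            refine mul_le_mul_of_nonneg_left ?_ (by positivity)
            exact pow_le_pow_left₀ hz0 hz 2
      refine e6.trans_lt ?_
      rw [div_mul_eq_mul_div, div_lt_iff₀ hn0]
      nlinarith [hn1]
    exact lt_of_pow_lt_pow_left₀ 2 (by positivity) e5
  -- membership of `1 - R` in the closed span of `M M*`
  set V : Submodule ℂ (H →L[ℂ] H) := Submodule.span ℂ (pmul M (sstar M)) with hVdef
  have hbV : b ∈ V := hbV'
  have hβV : β ∈ V := by rw [hβdef]; exact V.smul_mem _ hbV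
  have hstep : ∀ v, v ∈ V → v * w ∈ V := by
    intro v hv
    rw [hwdef, mul_smul_comm, hxdef, mul_sub, mul_smul_comm, mul_one]
    exact V.smul_mem _ (V.sub_mem (V.smul_mem _ hv) (hM.span_mul_span β hβV v hv))
  have hterm : ∀ k : ℕ, β * w ^ k ∈ V := by
    intro k
    induction k with
    | zero => simpa using hβV
    | succ k ih =>
      rw [pow_succ, ← mul_assoc]
      exact hstep _ ih
  have haV : (1 - R : H →L[ℂ] H) ∈ closure (V : Set (H →L[ℂ] H)) := by
    have heq : (1 - R : H →L[ℂ] H) = ((1 + c : ℝ) : ℂ)⁻¹ • (β * S) := by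
      rw [← hβR, hRdef, mul_smul_comm]
    have hsum : HasSum (fun k : ℕ => ((1 + c : ℝ) : ℂ)⁻¹ • (β * w ^ k)) (1 - R) := by
      rw [heq]
      exact (hSsum.mul_left β).const_smul _
    refine mem_closure_of_tendsto hsum (Filter.Eventually.of_forall fun t => ?_)
    exact Submodule.sum_mem _ fun k _ => V.smul_mem _ (hterm k)
  -- the approximating element of `M`
  refine ⟨(1 - R) * u, hM.clspan_mul_u_mem h1 haV, fun ξ hξ => ?_⟩
  have hdiff : u ξ - ((1 - R) * u) ξ = R (u ξ) := by
    have : ((1 - R) * u) ξ = u ξ - R (u ξ) := by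
      simp [sub_mul, ContinuousLinearMap.mul_apply, ContinuousLinearMap.sub_apply]
    rw [this]; abel
  rw [hdiff]
  have est1 : ‖R (u ξ - mf ξ (ζf ξ))‖ < ε / 3 := by
    calc ‖R (u ξ - mf ξ (ζf ξ))‖ ≤ ‖R‖ * ‖u ξ - mf ξ (ζf ξ)‖ := R.le_opNorm _
    _ ≤ 1 * ‖u ξ - mf ξ (ζf ξ)‖ := mul_le_mul_of_nonneg_right hRnorm (norm_nonneg _)
    _ = ‖u ξ - mf ξ (ζf ξ)‖ := one_mul _
    _ < ε / 3 := hef ξ hξ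
  have est2 : ‖R (mf ξ (ζf ξ))‖ < ε / 3 := by
    calc ‖R (mf ξ (ζf ξ))‖ = ‖(R * mf ξ) (ζf ξ)‖ := by rw [ContinuousLinearMap.mul_apply]
    _ ≤ ‖R * mf ξ‖ * ‖ζf ξ‖ := (R * mf ξ).le_opNorm _
    _ < ε / 3 := hRm ξ hξ
  calc ‖R (u ξ)‖ = ‖R (u ξ - mf ξ (ζf ξ)) + R (mf ξ (ζf ξ))‖ := by
        congr 1; rw [← map_add]; congr 1; abel
  _ ≤ ‖R (u ξ - mf ξ (ζf ξ))‖ + ‖R (mf ξ (ζf ξ))‖ := norm_add_le _ _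
  _ < ε / 3 + ε / 3 := add_lt_add est1 est2
  _ < ε := by linarith

/-- If `u` is strictly associated to the TRO `M` (associated, and moreover
`closure(u H) = closure(M H)` and `closure(u* H) = closure(M* H)`), then `u` lies in the
closure of `M` in the weak operator topology. -/
theorem stmt8 {M : Set (H →L[ℂ] H)} (hM : IsTRO M) (u : H →L[ℂ] H)
    (hu : AssociatedTo u M)
    (hs1 : closure (Set.range u) = closure (appSet M))
    (hs2 : closure (Set.range ⇑(star u : H →L[ℂ] H)) = closure (appSet (sstar M))) :
    (ContinuousLinearMapWOT.ofCLM u : H →WOT[ℂ] H) ∈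
      closure ((ContinuousLinearMapWOT.ofCLM : (H →L[ℂ] H) → (H →WOT[ℂ] H)) '' M) := by
  classical
  have hws := ContinuousLinearMapWOT.withSeminorms (σ := RingHom.id ℂ) (E := H) (F := H)
  rw [mem_closure_iff_nhds_basis hws.hasBasis_ball]
  rintro ⟨I, r⟩ (hr : 0 < r)
  have hsum0 : (0 : ℝ) ≤ ∑ p ∈ I, ‖p.2‖ := Finset.sum_nonneg fun _ _ => norm_nonneg _
  set B : ℝ := 1 + ∑ p ∈ I, ‖p.2‖ with hBdef
  have hB0 : (0 : ℝ) < B := by linarith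
  obtain ⟨m, hmM, hm⟩ := hM.key u hu.1 hs1 (I.image Prod.fst) (div_pos hr hB0)
  refine ⟨ContinuousLinearMapWOT.ofCLM m, ⟨m, hmM, rfl⟩, ?_⟩
  rw [Seminorm.mem_ball]
  refine Seminorm.finset_sup_apply_lt hr ?_
  intro p hp
  have hx : p.1 ∈ I.image Prod.fst := Finset.mem_image_of_mem Prod.fst hp
  have hpn : ‖p.2‖ ≤ ∑ q ∈ I, ‖q.2‖ := Finset.single_le_sum (fun q _ => norm_nonneg q.2) hp
  obtain ⟨px, py⟩ := p
  have hval : (ContinuousLinearMapWOT.seminormFamily (RingHom.id ℂ) H H (px, py))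
      (ContinuousLinearMapWOT.ofCLM m - ContinuousLinearMapWOT.ofCLM u) =
      ‖py ((ContinuousLinearMapWOT.ofCLM m - ContinuousLinearMapWOT.ofCLM u) px)‖ := rfl
  rw [hval, ContinuousLinearMapWOT.sub_apply, ContinuousLinearMapWOT.ofCLM_apply,
    ContinuousLinearMapWOT.ofCLM_apply]
  have h1 : ‖py (m px - u px)‖ ≤ ‖py‖ * ‖m px - u px‖ := py.le_opNorm _
  have h2 : ‖m px - u px‖ ≤ r / B := by
    rw [norm_sub_rev]
    exact (hm px hx).le
  have h3 : ‖py‖ ≤ B - 1 := by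
    rw [hBdef]
    simpa using hpn
  have h4 : ‖py‖ * ‖m px - u px‖ ≤ (B - 1) * (r / B) :=
    mul_le_mul h3 h2 (norm_nonneg _) (by linarith [norm_nonneg py])
  have h5 : (B - 1) * (r / B) < r := by
    have hrB : 0 < r / B := div_pos hr hB0
    have heq : (B - 1) * (r / B) = r - r / B := by field_simp
    rw [heq]; linarith
  calc ‖py (m px - u px)‖ ≤ ‖py‖ * ‖m px - u px‖ := h1
  _ ≤ (B - 1) * (r / B) := h4
  _ < r := h5
end
end

section
/- Let A, B be C*-algebras and F an imprimitivity Hilbert A,B-bimodule. Then F is regular (admits a unitary multiplier u : B → F, i.e. an adjointable operator with u*u = 1_B and uu* = 1_A) if and only if there exists a *-isomorphism φ : A → B such that F is isomorphic as an A,B-bimodule to the bimodule _φB (which is B with left A-action a·b := φ(a)b, left inner product _A⟨ξ,η⟩ := φ⁻¹(ξη*), right B-module structure and inner product from B). -/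
noncomputable section

/-- An imprimitivity Hilbert `A,B`-bimodule `F`: an `A,B`-bimodule with full `A`- and
`B`-valued inner products satisfying the usual axioms and the imprimitivity relation
`_A⟨f,g⟩ · h = f · ⟨g,h⟩_B`. -/
structure ImprimitivityBimodule (A B F : Type*)
    [NonUnitalCStarAlgebra A] [NonUnitalCStarAlgebra B]
    [AddCommGroup F] [Module ℂ F] where
  lsmul : A → F → F
  rsmul : F → B → F
  linner : F → F → A
  rinner : F → F → B
  lsmul_add : ∀ a (f g : F), lsmul a (f + g) = lsmul a f + lsmul a g
  add_lsmul : ∀ a a' (f : F), lsmul (a + a') f = lsmul a f + lsmul a' f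
  lsmul_smulc : ∀ (c : ℂ) a (f : F), lsmul (c • a) f = c • lsmul a f
  lsmul_smulc' : ∀ (c : ℂ) a (f : F), lsmul a (c • f) = c • lsmul a f
  lsmul_mul : ∀ a a' (f : F), lsmul (a * a') f = lsmul a (lsmul a' f)
  rsmul_add : ∀ (f g : F) b, rsmul (f + g) b = rsmul f b + rsmul g b
  add_rsmul : ∀ (f : F) b b', rsmul f (b + b') = rsmul f b + rsmul f b'
  rsmul_smulc : ∀ (c : ℂ) (f : F) b, rsmul f (c • b) = c • rsmul f b
  rsmul_smulc' : ∀ (c : ℂ) (f : F) b, rsmul (c • f) b = c • rsmul f b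
  rsmul_mul : ∀ (f : F) b b', rsmul (rsmul f b) b' = rsmul f (b * b')
  middle_assoc : ∀ a (f : F) b, rsmul (lsmul a f) b = lsmul a (rsmul f b)
  rinner_add_right : ∀ f g h : F, rinner f (g + h) = rinner f g + rinner f h
  rinner_smul_right : ∀ (c : ℂ) (f g : F), rinner f (c • g) = c • rinner f g
  rinner_star : ∀ f g : F, star (rinner f g) = rinner g f
  rinner_rsmul : ∀ (f g : F) b, rinner f (rsmul g b) = rinner f g * b
  rinner_pos : ∀ f : F, ∃ b, rinner f f = star b * b
  rinner_definite : ∀ f : F, rinner f f = 0 → f = 0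
  linner_add_left : ∀ f g h : F, linner (f + g) h = linner f h + linner g h
  linner_smul_left : ∀ (c : ℂ) (f g : F), linner (c • f) g = c • linner f g
  linner_star : ∀ f g : F, star (linner f g) = linner g f
  linner_lsmul : ∀ a (f g : F), linner (lsmul a f) g = a * linner f g
  linner_pos : ∀ f : F, ∃ a, linner f f = star a * a
  imprimitivity : ∀ f g h : F, lsmul (linner f g) h = rsmul f (rinner g h)
  full_right : closure (Submodule.span ℂ {b : B | ∃ f g : F, b = rinner f g} : Set B)
      = Set.univ
  full_left : closure (Submodule.span ℂ {a : A | ∃ f g : F, a = linner f g} : Set A)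
      = Set.univ

/-- `F` is regular: there is a unitary multiplier `u ∈ M(F) = L(B, F)`, i.e. an
adjointable operator `u : B → F` (with adjoint `v`) satisfying `u* u = 1_B`
(`v ∘ u = id`) and `u u* = 1_A` (`u ∘ v = id`). -/
def ImprimitivityBimodule.Regular {A B F : Type*}
    [NonUnitalCStarAlgebra A] [NonUnitalCStarAlgebra B]
    [AddCommGroup F] [Module ℂ F] (E : ImprimitivityBimodule A B F) : Prop :=
  ∃ (u : B → F) (v : F → B),
    (∀ b b', u (b + b') = u b + u b') ∧ (∀ (c : ℂ) b, u (c • b) = c • u b) ∧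
    (∀ b (f : F), E.rinner (u b) f = star b * v f) ∧
    (∀ b, v (u b) = b) ∧ (∀ f : F, u (v f) = f)

private lemma cstar_cancel_left {B : Type*} [NonUnitalCStarAlgebra B] {x : B}
    (h : ∀ z, x * z = 0) : x = 0 := by
  have h1 : star (star x) * star x = 0 := by rw [star_star]; exact h (star x)
  have h2 := CStarRing.norm_star_mul_self (x := star x)
  rw [h1, norm_zero, norm_star] at h2
  exact norm_eq_zero.mp (mul_self_eq_zero.mp h2.symm)

private lemma cstar_cancel_right {B : Type*} [NonUnitalCStarAlgebra B] {x : B}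
    (h : ∀ z, z * x = 0) : x = 0 := by
  have h1 : star x * x = 0 := h (star x)
  have h2 := CStarRing.norm_star_mul_self (x := x)
  rw [h1, norm_zero] at h2
  exact norm_eq_zero.mp (mul_self_eq_zero.mp h2.symm)

private lemma cstar_mul_star_cancel {B : Type*} [NonUnitalCStarAlgebra B] {x : B}
    (h : x * star x = 0) : x = 0 := by
  have h1 : star (star x) * star x = 0 := by rw [star_star]; exact h
  have h2 := CStarRing.norm_star_mul_self (x := star x)
  rw [h1, norm_zero, norm_star] at h2
  exact norm_eq_zero.mp (mul_self_eq_zero.mp h2.symm)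

private lemma dense_mul_cancel {A : Type*} [NonUnitalCStarAlgebra A] {d : A} {s : Set A}
    (hd : Dense (Submodule.span ℂ s : Set A)) (h : ∀ x ∈ s, d * x = 0) : d = 0 := by
  have hspan : ∀ x ∈ Submodule.span ℂ s, d * x = 0 := by
    intro x hx
    induction hx using Submodule.span_induction with
    | mem x hx => exact h x hx
    | zero => exact mul_zero d
    | add x y hx hy ihx ihy => rw [mul_add, ihx, ihy, add_zero]
    | smul c x hx ih => rw [mul_smul_comm, ih, smul_zero]
  have hall : ∀ x : A, d * x = 0 := by
    intro x
    have hsub : closure (Submodule.span ℂ s : Set A) ⊆ {y | d * y = 0} :=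
      closure_minimal (fun y hy => hspan y hy)
        (isClosed_eq (continuous_const.mul continuous_id) continuous_const)
    exact hsub (hd x)
  exact cstar_cancel_left hall

private lemma contraction_aux {A B : Type*} [NonUnitalCStarAlgebra A] [NonUnitalCStarAlgebra B]
    (D : Submodule ℂ A)
    (hDr : ∀ a ∈ D, ∀ a' : A, a * a' ∈ D)
    (hDs : ∀ a ∈ D, star a ∈ D)
    (f : (a : A) → a ∈ D → B)
    (hsmul : ∀ (c : ℂ) a ha h, f (c • a) h = c • f a ha)
    (hadd : ∀ a ha a' ha' h, f (a + a') h = f a ha + f a' ha')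
    (hmul : ∀ a ha a' ha' h, f (a * a') h = f a ha * f a' ha')
    (hstar : ∀ a ha h, f (star a) h = star (f a ha)) :
    ∀ a ha, ‖f a ha‖ ≤ ‖a‖ := by
  have hfcong : ∀ a ha a' ha', a = a' → f a ha = f a' ha' := by
    intro a ha a' ha' h; subst h; rfl
  intro a ha
  have hpD : star a * a ∈ D := hDr _ (hDs a ha) a
  set p : A := star a * a with hpdef
  set s : B := f p hpD with hsdef
  have hs_eq : s = star (f a ha) * f a ha := by
    rw [hsdef, hmul _ (hDs a ha) _ ha, hstar a ha]
  have hsa : IsSelfAdjoint s := by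
    rw [hs_eq]; exact IsSelfAdjoint.star_mul_self _
  have key : ‖s‖ ≤ ‖p‖ := by
    have hSsa : IsSelfAdjoint ((s : Unitization ℂ B)) := by
      rw [IsSelfAdjoint, ← Unitization.inr_star, hsa.star_eq]
    have hspec : ∀ k ∈ spectrum ℂ ((s : Unitization ℂ B)), ‖k‖ ≤ ‖p‖ := by
      intro k hk
      by_contra hlt
      push_neg at hlt
      have hk0 : k ≠ 0 := by
        intro h; rw [h, norm_zero] at hlt; exact absurd hlt (not_lt.mpr (norm_nonneg p))
      have hnotmem : k ∉ spectrum ℂ ((p : Unitization ℂ A)) := by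
        intro hmem
        have h2 := spectrum.subset_closedBall_norm ((p : Unitization ℂ A)) hmem
        rw [Metric.mem_closedBall, dist_zero_right, Unitization.norm_inr] at h2
        exact absurd hlt (not_lt.mpr h2)
      rw [spectrum.notMem_iff] at hnotmem
      obtain ⟨w, hw⟩ := hnotmem
      have hinv1 : (algebraMap ℂ (Unitization ℂ A) k - (p : Unitization ℂ A)) * ↑w⁻¹ = 1 := by
        rw [← hw]; exact w.mul_inv
      have hinv2 : (↑w⁻¹ : Unitization ℂ A) * (algebraMap ℂ (Unitization ℂ A) k - ↑p) = 1 := by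
        rw [← hw]; exact w.inv_mul
      set r : A := (↑w⁻¹ : Unitization ℂ A).snd with hrdef
      set μ : ℂ := (↑w⁻¹ : Unitization ℂ A).fst with hμdef
      have hcfst : (algebraMap ℂ (Unitization ℂ A) k - (p : Unitization ℂ A)).fst = k := by
        rw [sub_eq_add_neg, Unitization.fst_add, Unitization.fst_neg,
          Unitization.algebraMap_eq_inl, Unitization.fst_inl, Unitization.fst_inr]
        simp
      have hcsnd : (algebraMap ℂ (Unitization ℂ A) k - (p : Unitization ℂ A)).snd = -p := by
        rw [sub_eq_add_neg, Unitization.snd_add, Unitization.snd_neg,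
          Unitization.algebraMap_eq_inl, Unitization.snd_inl, Unitization.snd_inr]
        simp
      have hfst : k * μ = 1 := by
        have h3 := congrArg (fun x : Unitization ℂ A => x.fst) hinv1
        rwa [Unitization.fst_mul, hcfst, Unitization.fst_one, ← hμdef] at h3
      have hμk : μ = k⁻¹ := by
        rw [← inv_mul_cancel_left₀ hk0 μ, hfst, mul_one]
      have hsnd1 : k • r = k⁻¹ • p + p * r := by
        have h3 := congrArg (fun x : Unitization ℂ A => x.snd) hinv1
        rw [Unitization.snd_mul, hcfst, hcsnd, ← hrdef, ← hμdef, hμk,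
          Unitization.snd_one, smul_neg, neg_mul] at h3
        rw [← sub_eq_zero]
        calc k • r - (k⁻¹ • p + p * r) = k • r + -(k⁻¹ • p) + -(p * r) := by abel
        _ = 0 := h3
      have hsnd2 : k • r = k⁻¹ • p + r * p := by
        have h3 := congrArg (fun x : Unitization ℂ A => x.snd) hinv2
        rw [Unitization.snd_mul, hcfst, hcsnd, ← hrdef, ← hμdef, hμk,
          Unitization.snd_one, smul_neg, mul_neg] at h3
        rw [← sub_eq_zero]
        calc k • r - (k⁻¹ • p + r * p) = -(k⁻¹ • p) + k • r + -(r * p) := by abel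
        _ = 0 := h3
      -- membership of r in D
      have hrD : r ∈ D := by
        have h4 : r = k⁻¹ • (k⁻¹ • p + p * r) := by
          rw [← hsnd1, inv_smul_smul₀ hk0]
        rw [h4]
        exact Submodule.smul_mem _ _
          (add_mem (Submodule.smul_mem _ _ hpD) (hDr p hpD r))
      set t : B := f r hrD with htdef
      have hm2 : (k⁻¹ : ℂ) • p ∈ D := Submodule.smul_mem _ _ hpD
      have hm3 : p * r ∈ D := hDr p hpD r
      have hm3' : r * p ∈ D := hDr r hrD p
      have hm4 : k⁻¹ • p + p * r ∈ D := add_mem hm2 hm3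
      have hm4' : k⁻¹ • p + r * p ∈ D := add_mem hm2 hm3'
      have hm1 : (k : ℂ) • r ∈ D := Submodule.smul_mem _ _ hrD
      have ft1 : k • t = k⁻¹ • s + s * t := by
        calc k • t = f (k • r) hm1 := (hsmul k r hrD hm1).symm
        _ = f (k⁻¹ • p + p * r) hm4 := hfcong _ hm1 _ hm4 hsnd1
        _ = f (k⁻¹ • p) hm2 + f (p * r) hm3 := hadd _ hm2 _ hm3 hm4
        _ = k⁻¹ • s + s * t := by rw [hsmul k⁻¹ p hpD hm2, hmul p hpD r hrD hm3]
      have ft2 : k • t = k⁻¹ • s + t * s := by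
        calc k • t = f (k • r) hm1 := (hsmul k r hrD hm1).symm
        _ = f (k⁻¹ • p + r * p) hm4' := hfcong _ hm1 _ hm4' hsnd2
        _ = f (k⁻¹ • p) hm2 + f (r * p) hm3' := hadd _ hm2 _ hm3' hm4'
        _ = k⁻¹ • s + t * s := by rw [hsmul k⁻¹ p hpD hm2, hmul r hrD p hpD hm3']
      -- construct inverse in Unitization ℂ B
      have hmain1 : (algebraMap ℂ (Unitization ℂ B) k - (s : Unitization ℂ B)) *
          (algebraMap ℂ (Unitization ℂ B) k⁻¹ + (t : Unitization ℂ B)) = 1 := by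
        have hbfst : (algebraMap ℂ (Unitization ℂ B) k - (s : Unitization ℂ B)).fst = k := by
          rw [sub_eq_add_neg, Unitization.fst_add, Unitization.fst_neg,
            Unitization.algebraMap_eq_inl, Unitization.fst_inl, Unitization.fst_inr]
          simp
        have hbsnd : (algebraMap ℂ (Unitization ℂ B) k - (s : Unitization ℂ B)).snd = -s := by
          rw [sub_eq_add_neg, Unitization.snd_add, Unitization.snd_neg,
            Unitization.algebraMap_eq_inl, Unitization.snd_inl, Unitization.snd_inr]
          simp
        have hdfst : (algebraMap ℂ (Unitization ℂ B) k⁻¹ + (t : Unitization ℂ B)).fst = k⁻¹ := by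
          rw [Unitization.fst_add, Unitization.algebraMap_eq_inl, Unitization.fst_inl,
            Unitization.fst_inr, add_zero]
        have hdsnd : (algebraMap ℂ (Unitization ℂ B) k⁻¹ + (t : Unitization ℂ B)).snd = t := by
          rw [Unitization.snd_add, Unitization.algebraMap_eq_inl, Unitization.snd_inl,
            Unitization.snd_inr, zero_add]
        apply Unitization.ext
        · rw [Unitization.fst_mul, hbfst, hdfst, Unitization.fst_one, mul_inv_cancel₀ hk0]
        · rw [Unitization.snd_mul, hbfst, hbsnd, hdfst, hdsnd, Unitization.snd_one]
          rw [smul_neg, neg_mul]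
          rw [← sub_eq_zero]
          calc k • t + -(k⁻¹ • s) + -(s * t) - 0 = k • t - (k⁻¹ • s + s * t) := by abel
          _ = 0 := by rw [ft1, sub_self]
      have hmain2 : (algebraMap ℂ (Unitization ℂ B) k⁻¹ + (t : Unitization ℂ B)) *
          (algebraMap ℂ (Unitization ℂ B) k - (s : Unitization ℂ B)) = 1 := by
        have hbfst : (algebraMap ℂ (Unitization ℂ B) k - (s : Unitization ℂ B)).fst = k := by
          rw [sub_eq_add_neg, Unitization.fst_add, Unitization.fst_neg,
            Unitization.algebraMap_eq_inl, Unitization.fst_inl, Unitization.fst_inr]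
          simp
        have hbsnd : (algebraMap ℂ (Unitization ℂ B) k - (s : Unitization ℂ B)).snd = -s := by
          rw [sub_eq_add_neg, Unitization.snd_add, Unitization.snd_neg,
            Unitization.algebraMap_eq_inl, Unitization.snd_inl, Unitization.snd_inr]
          simp
        have hdfst : (algebraMap ℂ (Unitization ℂ B) k⁻¹ + (t : Unitization ℂ B)).fst = k⁻¹ := by
          rw [Unitization.fst_add, Unitization.algebraMap_eq_inl, Unitization.fst_inl,
            Unitization.fst_inr, add_zero]
        have hdsnd : (algebraMap ℂ (Unitization ℂ B) k⁻¹ + (t : Unitization ℂ B)).snd = t := by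
          rw [Unitization.snd_add, Unitization.algebraMap_eq_inl, Unitization.snd_inl,
            Unitization.snd_inr, zero_add]
        apply Unitization.ext
        · rw [Unitization.fst_mul, hbfst, hdfst, Unitization.fst_one, inv_mul_cancel₀ hk0]
        · rw [Unitization.snd_mul, hbfst, hbsnd, hdfst, hdsnd, Unitization.snd_one]
          rw [smul_neg, mul_neg]
          rw [← sub_eq_zero]
          calc -(k⁻¹ • s) + k • t + -(t * s) - 0 = k • t - (k⁻¹ • s + t * s) := by abel
          _ = 0 := by rw [ft2, sub_self]
      have hunit : IsUnit (algebraMap ℂ (Unitization ℂ B) k - (s : Unitization ℂ B)) :=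
        ⟨⟨_, _, hmain1, hmain2⟩, rfl⟩
      exact (spectrum.notMem_iff.mpr hunit) hk
    have hrad : spectralRadius ℂ ((s : Unitization ℂ B)) ≤ (‖p‖₊ : ENNReal) := by
      refine iSup₂_le fun k hk => ?_
      have h2 := hspec k hk
      exact_mod_cast ENNReal.coe_le_coe.mpr (by
        rw [← NNReal.coe_le_coe, coe_nnnorm, coe_nnnorm]; exact h2)
    rw [hSsa.spectralRadius_eq_nnnorm] at hrad
    have h3 : ‖(s : Unitization ℂ B)‖ ≤ ‖p‖ := by exact_mod_cast hrad
    rwa [Unitization.norm_inr] at h3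
  have h1 : ‖f a ha‖ * ‖f a ha‖ ≤ ‖a‖ * ‖a‖ := by
    calc ‖f a ha‖ * ‖f a ha‖ = ‖star (f a ha) * f a ha‖ := CStarRing.norm_star_mul_self.symm
    _ = ‖s‖ := by rw [hs_eq]
    _ ≤ ‖p‖ := key
    _ = ‖a‖ * ‖a‖ := by rw [hpdef]; exact CStarRing.norm_star_mul_self
  nlinarith [norm_nonneg (f a ha), norm_nonneg a]
private theorem ImprimitivityBimodule.regular_forward {A B F : Type*}
    [NonUnitalCStarAlgebra A] [NonUnitalCStarAlgebra B]
    [AddCommGroup F] [Module ℂ F] (E : ImprimitivityBimodule A B F)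
    (hreg : E.Regular) :
    ∃ (φ : A ≃⋆ₐ[ℂ] B) (Θ : B ≃ₗ[ℂ] F),
        (∀ a b, Θ (φ a * b) = E.lsmul a (Θ b)) ∧
        (∀ b c, Θ (b * c) = E.rsmul (Θ b) c) ∧
        (∀ b c, E.rinner (Θ b) (Θ c) = star b * c) ∧
        (∀ b c, E.linner (Θ b) (Θ c) = φ.symm (b * star c)) := by
  obtain ⟨u, v, hu_add, hu_smul, hri, hvu, huv⟩ := hreg
  -- basic consequences
  have u_inj : ∀ {b b' : B}, u b = u b' → b = b' := by
    intro b b' h; rw [← hvu b, ← hvu b', h]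
  have v_inj : ∀ {f g : F}, v f = v g → f = g := by
    intro f g h; rw [← huv f, ← huv g, h]
  have u_zero : u 0 = 0 := by simpa using hu_smul 0 0
  have v_zero : v 0 = 0 := by have := hvu 0; rwa [u_zero] at this
  have v_add : ∀ f g : F, v (f + g) = v f + v g := by
    intro f g; apply u_inj; rw [huv, hu_add, huv, huv]
  have v_smul : ∀ (c : ℂ) (f : F), v (c • f) = c • v f := by
    intro c f; apply u_inj; rw [huv, hu_smul, huv]
  have hri' : ∀ f g : F, E.rinner f g = star (v f) * v g := by
    intro f g
    conv_lhs => rw [← huv f]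
    rw [hri]
  have v_rsmul : ∀ (f : F) (c : B), v (E.rsmul f c) = v f * c := by
    intro f c
    have key : ∀ z : B, z * (v (E.rsmul f c) - v f * c) = 0 := by
      intro z
      have h1 := E.rinner_rsmul (u (star z)) f c
      rw [hri, hri, star_star] at h1
      rw [mul_sub, h1, mul_assoc, sub_self]
    exact sub_eq_zero.mp (cstar_cancel_right key)
  have u_mul : ∀ b c : B, u (b * c) = E.rsmul (u b) c := by
    intro b c; apply v_inj; rw [hvu, v_rsmul, hvu]
  have lsmul_zero : ∀ h : F, E.lsmul (0 : A) h = 0 := by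
    intro h; have := E.lsmul_smulc 0 0 h; simpa using this
  have linner_zero_left : ∀ g : F, E.linner 0 g = 0 := by
    intro g; have := E.linner_smul_left 0 0 g; simpa using this
  have linner_sub_left : ∀ f g h : F, E.linner (f - g) h = E.linner f h - E.linner g h := by
    intro f g h
    have h1 := E.linner_add_left (f - g) g h
    rw [sub_add_cancel] at h1
    exact (sub_eq_iff_eq_add.mpr h1).symm
  have alpha_linner : ∀ (f g : F) (z : B),
      v (E.lsmul (E.linner f g) (u z)) = v f * (star (v g) * z) := by
    intro f g z
    rw [E.imprimitivity f g (u z), v_rsmul, hri', hvu]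
  have alpha_lam : ∀ x y z : B,
      v (E.lsmul (E.linner (u x) (u y)) (u z)) = x * (star y * z) := by
    intro x y z
    rw [alpha_linner (u x) (u y) z, hvu, hvu]
  have lam_alpha : ∀ (a : A) (z w : B),
      E.linner (u (v (E.lsmul a (u z)))) (u w) = a * E.linner (u z) (u w) := by
    intro a z w; rw [huv, E.linner_lsmul]
  have linner_detect : ∀ f : F, (∀ g, E.linner f g = 0) → f = 0 := by
    intro f hf
    have hgen : ∀ x ∈ {b : B | ∃ f g : F, b = E.rinner f g}, v f * x = 0 := by
      rintro x ⟨g, h, rfl⟩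
      have h1 : E.rsmul f (E.rinner g h) = E.lsmul (E.linner f g) h :=
        (E.imprimitivity f g h).symm
      have h2 := congrArg v h1
      rw [v_rsmul, hf g, lsmul_zero, v_zero] at h2
      exact h2
    have hdense : Dense (Submodule.span ℂ {b : B | ∃ f g : F, b = E.rinner f g} : Set B) := by
      rw [dense_iff_closure_eq]; exact E.full_right
    have h0 : v f = 0 := dense_mul_cancel hdense hgen
    rw [← huv f, h0, u_zero]
  have u_detect : ∀ x y : B,
      (∀ w : B, E.linner (u x) (u w) = E.linner (u y) (u w)) → x = y := by
    intro x y hxy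
    have h1 : ∀ g : F, E.linner (u x - u y) g = 0 := by
      intro g
      rw [linner_sub_left, ← huv g, hxy (v g), sub_self]
    exact u_inj (sub_eq_zero.mp (linner_detect _ h1))
  -- the dense spans
  have hDAdense : Dense ((Submodule.span ℂ {a : A | ∃ f g : F, a = E.linner f g}) : Set A) := by
    rw [dense_iff_closure_eq]; exact E.full_left
  have hDAr : ∀ a ∈ Submodule.span ℂ {a : A | ∃ f g : F, a = E.linner f g},
      ∀ c : A, a * c ∈ Submodule.span ℂ {a : A | ∃ f g : F, a = E.linner f g} := by
    intro a ha
    induction ha using Submodule.span_induction with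
    | mem x hx =>
      intro c
      obtain ⟨f, g, rfl⟩ := hx
      refine Submodule.subset_span ⟨f, E.lsmul (star c) g, ?_⟩
      have h1 : star (E.linner f g * c) = star (E.linner f (E.lsmul (star c) g)) := by
        rw [star_mul, E.linner_star, E.linner_star, E.linner_lsmul]
      exact star_injective h1
    | zero => intro c; rw [zero_mul]; exact zero_mem _
    | add x y hx hy ihx ihy => intro c; rw [add_mul]; exact add_mem (ihx c) (ihy c)
    | smul d x hx ih => intro c; rw [smul_mul_assoc]; exact Submodule.smul_mem _ _ (ih c)
  have hDAl : ∀ (c : A), ∀ a ∈ Submodule.span ℂ {a : A | ∃ f g : F, a = E.linner f g},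
      c * a ∈ Submodule.span ℂ {a : A | ∃ f g : F, a = E.linner f g} := by
    intro c a ha
    induction ha using Submodule.span_induction with
    | mem x hx =>
      obtain ⟨f, g, rfl⟩ := hx
      exact Submodule.subset_span ⟨E.lsmul c f, g, (E.linner_lsmul c f g).symm⟩
    | zero => rw [mul_zero]; exact zero_mem _
    | add x y hx hy ihx ihy => rw [mul_add]; exact add_mem ihx ihy
    | smul d x hx ih => rw [mul_smul_comm]; exact Submodule.smul_mem _ _ ih
  have hDAs : ∀ a ∈ Submodule.span ℂ {a : A | ∃ f g : F, a = E.linner f g},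
      star a ∈ Submodule.span ℂ {a : A | ∃ f g : F, a = E.linner f g} := by
    intro a ha
    induction ha using Submodule.span_induction with
    | mem x hx =>
      obtain ⟨f, g, rfl⟩ := hx
      exact Submodule.subset_span ⟨g, f, E.linner_star f g⟩
    | zero => rw [star_zero]; exact zero_mem _
    | add x y hx hy ihx ihy => rw [star_add]; exact add_mem ihx ihy
    | smul d x hx ih => rw [star_smul]; exact Submodule.smul_mem _ _ ih
  have hDBdense : Dense ((Submodule.span ℂ {x : B | ∃ y z : B, x = y * star z}) : Set B) := by
    have hsub : Submodule.span ℂ {b : B | ∃ f g : F, b = E.rinner f g} ≤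
        Submodule.span ℂ {x : B | ∃ y z : B, x = y * star z} := by
      refine Submodule.span_le.mpr ?_
      rintro b ⟨f, g, rfl⟩
      refine Submodule.subset_span ⟨star (v f), star (v g), ?_⟩
      rw [hri', star_star]
    have h1 : closure (Submodule.span ℂ {b : B | ∃ f g : F, b = E.rinner f g} : Set B) ⊆
        closure ((Submodule.span ℂ {x : B | ∃ y z : B, x = y * star z}) : Set B) :=
      closure_mono hsub
    rw [E.full_right] at h1
    rw [dense_iff_closure_eq]
    exact Set.eq_univ_of_univ_subset h1
  have hDBr : ∀ x ∈ Submodule.span ℂ {x : B | ∃ y z : B, x = y * star z},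
      ∀ c : B, x * c ∈ Submodule.span ℂ {x : B | ∃ y z : B, x = y * star z} := by
    intro x hx
    induction hx using Submodule.span_induction with
    | mem x0 h0 =>
      intro c
      obtain ⟨y, z, rfl⟩ := h0
      refine Submodule.subset_span ⟨y, star c * z, ?_⟩
      rw [star_mul, star_star, ← mul_assoc]
    | zero => intro c; rw [zero_mul]; exact zero_mem _
    | add x y hx hy ihx ihy => intro c; rw [add_mul]; exact add_mem (ihx c) (ihy c)
    | smul d x hx ih => intro c; rw [smul_mul_assoc]; exact Submodule.smul_mem _ _ (ih c)
  have hDBs : ∀ x ∈ Submodule.span ℂ {x : B | ∃ y z : B, x = y * star z},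
      star x ∈ Submodule.span ℂ {x : B | ∃ y z : B, x = y * star z} := by
    intro x hx
    induction hx using Submodule.span_induction with
    | mem x0 h0 =>
      obtain ⟨y, z, rfl⟩ := h0
      refine Submodule.subset_span ⟨z, y, ?_⟩
      rw [star_mul, star_star]
    | zero => rw [star_zero]; exact zero_mem _
    | add x y hx hy ihx ihy => rw [star_add]; exact add_mem ihx ihy
    | smul d x hx ih => rw [star_smul]; exact Submodule.smul_mem _ _ ih
  -- φ0 : DA → B
  have huniqP : ∀ x x' : B, (∀ z, x * z = x' * z) → x = x' := by
    intro x x' h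
    have h1 : ∀ z, (x - x') * z = 0 := fun z => by rw [sub_mul, h z, sub_self]
    exact sub_eq_zero.mp (cstar_cancel_left h1)
  have hexP : ∀ a ∈ Submodule.span ℂ {a : A | ∃ f g : F, a = E.linner f g},
      ∃ x : B, x ∈ Submodule.span ℂ {x : B | ∃ y z : B, x = y * star z} ∧
        (∀ z, x * z = v (E.lsmul a (u z))) ∧
        (∀ z, star x * z = v (E.lsmul (star a) (u z))) := by
    intro a ha
    induction ha using Submodule.span_induction with
    | mem a0 h0 =>
      obtain ⟨f, g, rfl⟩ := h0
      refine ⟨v f * star (v g), Submodule.subset_span ⟨v f, v g, rfl⟩,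
        fun z => ?_, fun z => ?_⟩
      · rw [alpha_linner, mul_assoc]
      · rw [star_mul, star_star, E.linner_star, alpha_linner, mul_assoc]
    | zero =>
      refine ⟨0, zero_mem _, fun z => ?_, fun z => ?_⟩
      · rw [zero_mul, lsmul_zero, v_zero]
      · rw [star_zero, zero_mul, star_zero, lsmul_zero, v_zero]
    | add a1 a2 ha1 ha2 ih ih' =>
      obtain ⟨x, hxD, hx1, hx2⟩ := ih
      obtain ⟨x', hx'D, hx'1, hx'2⟩ := ih'
      refine ⟨x + x', add_mem hxD hx'D, fun z => ?_, fun z => ?_⟩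
      · rw [add_mul, hx1 z, hx'1 z, ← v_add, ← E.add_lsmul]
      · rw [star_add, add_mul, hx2 z, hx'2 z, ← v_add, ← E.add_lsmul, ← star_add]
    | smul c a0 ha0 ih =>
      obtain ⟨x, hxD, hx1, hx2⟩ := ih
      refine ⟨c • x, Submodule.smul_mem _ _ hxD, fun z => ?_, fun z => ?_⟩
      · rw [smul_mul_assoc, hx1 z, ← v_smul, ← E.lsmul_smulc]
      · rw [star_smul, smul_mul_assoc, hx2 z, ← v_smul, ← E.lsmul_smulc, ← star_smul]
  choose φ0 hφ0mem hφ01 hφ02 using hexP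
  have hφ0_eq : ∀ a ha (x : B), (∀ z, x * z = v (E.lsmul a (u z))) → φ0 a ha = x := by
    intro a ha x hx
    exact huniqP _ _ (fun z => by rw [hφ01 a ha z, hx z])
  have φ0_add : ∀ a ha a' ha' h, φ0 (a + a') h = φ0 a ha + φ0 a' ha' := by
    intro a ha a' ha' h
    exact hφ0_eq _ _ _ (fun z => by
      rw [add_mul, hφ01 a ha z, hφ01 a' ha' z, ← v_add, ← E.add_lsmul])
  have φ0_smul : ∀ (c : ℂ) a ha h, φ0 (c • a) h = c • φ0 a ha := by
    intro c a ha h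
    exact hφ0_eq _ _ _ (fun z => by
      rw [smul_mul_assoc, hφ01 a ha z, ← v_smul, ← E.lsmul_smulc])
  have φ0_mul : ∀ a ha a' ha' h, φ0 (a * a') h = φ0 a ha * φ0 a' ha' := by
    intro a ha a' ha' h
    refine hφ0_eq _ _ _ (fun z => ?_)
    rw [mul_assoc, hφ01 a' ha' z, hφ01 a ha (v (E.lsmul a' (u z))), huv, ← E.lsmul_mul]
  have φ0_star : ∀ a ha h, φ0 (star a) h = star (φ0 a ha) := by
    intro a ha h
    exact hφ0_eq _ _ _ (fun z => hφ02 a ha z)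
  have hφbound : ∀ a ha, ‖φ0 a ha‖ ≤ ‖a‖ :=
    contraction_aux _ hDAr hDAs φ0 φ0_smul φ0_add φ0_mul φ0_star
  -- ψ0 : DB → A
  have huniqQ : ∀ a a' : A,
      (∀ z w : B, a * E.linner (u z) (u w) = a' * E.linner (u z) (u w)) → a = a' := by
    intro a a' h
    have hgen : ∀ x ∈ {b : A | ∃ f g : F, b = E.linner f g}, (a - a') * x = 0 := by
      rintro x ⟨f, g, rfl⟩
      rw [sub_mul, ← huv f, ← huv g, h (v f) (v g), sub_self]
    exact sub_eq_zero.mp (dense_mul_cancel hDAdense hgen)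
  have hexQ : ∀ x ∈ Submodule.span ℂ {x : B | ∃ y z : B, x = y * star z},
      ∃ a : A, a ∈ Submodule.span ℂ {a : A | ∃ f g : F, a = E.linner f g} ∧
        (∀ z w, E.linner (u (x * z)) (u w) = a * E.linner (u z) (u w)) ∧
        (∀ z w, E.linner (u (star x * z)) (u w) = star a * E.linner (u z) (u w)) := by
    intro x hx
    induction hx using Submodule.span_induction with
    | mem x0 h0 =>
      obtain ⟨y, z0, rfl⟩ := h0
      refine ⟨E.linner (u y) (u z0), Submodule.subset_span ⟨u y, u z0, rfl⟩,
        fun z w => ?_, fun z w => ?_⟩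
      · have h1 : (y * star z0) * z = v (E.lsmul (E.linner (u y) (u z0)) (u z)) := by
          rw [alpha_lam, mul_assoc]
        rw [h1, lam_alpha]
      · have h2 : star (y * star z0) = z0 * star y := by rw [star_mul, star_star]
        have h1 : (z0 * star y) * z = v (E.lsmul (E.linner (u z0) (u y)) (u z)) := by
          rw [alpha_lam, mul_assoc]
        rw [h2, h1, lam_alpha, ← E.linner_star]
    | zero =>
      refine ⟨0, zero_mem _, fun z w => ?_, fun z w => ?_⟩
      · rw [zero_mul, u_zero, linner_zero_left, zero_mul]
      · rw [star_zero, zero_mul, u_zero, linner_zero_left, star_zero, zero_mul]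
    | add x1 x2 hx1 hx2 ih ih' =>
      obtain ⟨a, haD, ha1, ha2⟩ := ih
      obtain ⟨a', ha'D, ha'1, ha'2⟩ := ih'
      refine ⟨a + a', add_mem haD ha'D, fun z w => ?_, fun z w => ?_⟩
      · rw [add_mul, hu_add, E.linner_add_left, ha1, ha'1, ← add_mul]
      · rw [star_add, add_mul, hu_add, E.linner_add_left, ha2, ha'2, ← add_mul, ← star_add]
    | smul c x0 hx0 ih =>
      obtain ⟨a, haD, ha1, ha2⟩ := ih
      refine ⟨c • a, Submodule.smul_mem _ _ haD, fun z w => ?_, fun z w => ?_⟩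
      · rw [smul_mul_assoc, hu_smul, E.linner_smul_left, ha1, smul_mul_assoc]
      · rw [star_smul, smul_mul_assoc, hu_smul, E.linner_smul_left, ha2,
          ← smul_mul_assoc, ← star_smul]
  choose ψ0 hψ0mem hψ01 hψ02 using hexQ
  have hψ0_eq : ∀ x hx (a : A),
      (∀ z w, E.linner (u (x * z)) (u w) = a * E.linner (u z) (u w)) → ψ0 x hx = a := by
    intro x hx a hcond
    exact huniqQ _ _ (fun z w => by rw [← hψ01 x hx z w, hcond z w])
  have ψ0_add : ∀ x hx x' hx' h, ψ0 (x + x') h = ψ0 x hx + ψ0 x' hx' := by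
    intro x hx x' hx' h
    exact hψ0_eq _ _ _ (fun z w => by
      rw [add_mul, hu_add, E.linner_add_left, hψ01 x hx, hψ01 x' hx', ← add_mul])
  have ψ0_smul : ∀ (c : ℂ) x hx h, ψ0 (c • x) h = c • ψ0 x hx := by
    intro c x hx h
    exact hψ0_eq _ _ _ (fun z w => by
      rw [smul_mul_assoc, hu_smul, E.linner_smul_left, hψ01 x hx, smul_mul_assoc])
  have ψ0_mul : ∀ x hx x' hx' h, ψ0 (x * x') h = ψ0 x hx * ψ0 x' hx' := by
    intro x hx x' hx' h
    refine hψ0_eq _ _ _ (fun z w => ?_)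
    rw [mul_assoc, hψ01 x hx (x' * z) w, hψ01 x' hx' z w, ← mul_assoc]
  have ψ0_star : ∀ x hx h, ψ0 (star x) h = star (ψ0 x hx) := by
    intro x hx h
    exact hψ0_eq _ _ _ (fun z w => hψ02 x hx z w)
  have hψbound : ∀ x hx, ‖ψ0 x hx‖ ≤ ‖x‖ :=
    contraction_aux _ hDBr hDBs ψ0 ψ0_smul ψ0_add ψ0_mul ψ0_star
  -- package φ0 into a continuous linear map and extend
  let LA : (Submodule.span ℂ {a : A | ∃ f g : F, a = E.linner f g}) →ₗ[ℂ] B :=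
    { toFun := fun x => φ0 x.1 x.2
      map_add' := fun x y => φ0_add x.1 x.2 y.1 y.2 (add_mem x.2 y.2)
      map_smul' := fun c x => φ0_smul c x.1 x.2 (Submodule.smul_mem _ _ x.2) }
  let LAc : (Submodule.span ℂ {a : A | ∃ f g : F, a = E.linner f g}) →L[ℂ] B :=
    LinearMap.mkContinuous LA 1 (fun x => by rw [one_mul]; exact hφbound x.1 x.2)
  have hjdenseA : DenseRange
      ⇑((Submodule.span ℂ {a : A | ∃ f g : F, a = E.linner f g}).subtypeL) := by
    show Dense (Set.range (Subtype.val :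
      (Submodule.span ℂ {a : A | ∃ f g : F, a = E.linner f g}) → A))
    rw [Subtype.range_coe]
    exact hDAdense
  have hjuniA : IsUniformInducing
      ⇑((Submodule.span ℂ {a : A | ∃ f g : F, a = E.linner f g}).subtypeL) :=
    isUniformEmbedding_subtype_val.isUniformInducing
  let Φ : A →L[ℂ] B := LAc.extend (Submodule.span ℂ {a : A | ∃ f g : F, a = E.linner f g}).subtypeL
  have hΦ : ∀ (a : A) (ha : a ∈ Submodule.span ℂ {a : A | ∃ f g : F, a = E.linner f g}),
      Φ a = φ0 a ha := by
    intro a ha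
    exact ContinuousLinearMap.extend_eq LAc hjdenseA hjuniA ⟨a, ha⟩
  let LB : (Submodule.span ℂ {x : B | ∃ y z : B, x = y * star z}) →ₗ[ℂ] A :=
    { toFun := fun x => ψ0 x.1 x.2
      map_add' := fun x y => ψ0_add x.1 x.2 y.1 y.2 (add_mem x.2 y.2)
      map_smul' := fun c x => ψ0_smul c x.1 x.2 (Submodule.smul_mem _ _ x.2) }
  let LBc : (Submodule.span ℂ {x : B | ∃ y z : B, x = y * star z}) →L[ℂ] A :=
    LinearMap.mkContinuous LB 1 (fun x => by rw [one_mul]; exact hψbound x.1 x.2)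
  have hjdenseB : DenseRange
      ⇑((Submodule.span ℂ {x : B | ∃ y z : B, x = y * star z}).subtypeL) := by
    show Dense (Set.range (Subtype.val :
      (Submodule.span ℂ {x : B | ∃ y z : B, x = y * star z}) → B))
    rw [Subtype.range_coe]
    exact hDBdense
  have hjuniB : IsUniformInducing
      ⇑((Submodule.span ℂ {x : B | ∃ y z : B, x = y * star z}).subtypeL) :=
    isUniformEmbedding_subtype_val.isUniformInducing
  let Ψ : B →L[ℂ] A := LBc.extend (Submodule.span ℂ {x : B | ∃ y z : B, x = y * star z}).subtypeL
  have hΨ : ∀ (x : B) (hx : x ∈ Submodule.span ℂ {x : B | ∃ y z : B, x = y * star z}),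
      Ψ x = ψ0 x hx := by
    intro x hx
    exact ContinuousLinearMap.extend_eq LBc hjdenseB hjuniB ⟨x, hx⟩
  -- algebraic properties of the extensions, by density
  have hΦmul : ∀ a b : A, Φ (a * b) = Φ a * Φ b := by
    have key : (fun q : A × A => Φ (q.1 * q.2)) = fun q : A × A => Φ q.1 * Φ q.2 := by
      apply Continuous.ext_on (hDAdense.prod hDAdense)
      · exact Φ.continuous.comp continuous_mul
      · exact (Φ.continuous.comp continuous_fst).mul (Φ.continuous.comp continuous_snd)
      · rintro ⟨a, b⟩ ⟨ha, hb⟩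
        have hab : a * b ∈ Submodule.span ℂ {a : A | ∃ f g : F, a = E.linner f g} :=
          hDAr a ha b
        simp only
        rw [hΦ _ hab, hΦ _ ha, hΦ _ hb, φ0_mul a ha b hb hab]
    intro a b
    exact congrFun key (a, b)
  have hΦstar : ∀ a : A, Φ (star a) = star (Φ a) := by
    have key : (fun a : A => Φ (star a)) = fun a : A => star (Φ a) := by
      apply Continuous.ext_on hDAdense
      · exact Φ.continuous.comp continuous_star
      · exact continuous_star.comp Φ.continuous
      · intro a ha
        have hsa := hDAs a ha
        simp only
        rw [hΦ _ hsa, hΦ _ ha, φ0_star a ha hsa]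
    intro a
    exact congrFun key a
  have hΨmul : ∀ x y : B, Ψ (x * y) = Ψ x * Ψ y := by
    have key : (fun q : B × B => Ψ (q.1 * q.2)) = fun q : B × B => Ψ q.1 * Ψ q.2 := by
      apply Continuous.ext_on (hDBdense.prod hDBdense)
      · exact Ψ.continuous.comp continuous_mul
      · exact (Ψ.continuous.comp continuous_fst).mul (Ψ.continuous.comp continuous_snd)
      · rintro ⟨x, y⟩ ⟨hx, hy⟩
        have hxy : x * y ∈ Submodule.span ℂ {x : B | ∃ y z : B, x = y * star z} :=
          hDBr x hx y
        simp only
        rw [hΨ _ hxy, hΨ _ hx, hΨ _ hy, ψ0_mul x hx y hy hxy]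
    intro x y
    exact congrFun key (x, y)
  have hΨΦ : ∀ a : A, Ψ (Φ a) = a := by
    have key : (fun a : A => Ψ (Φ a)) = fun a : A => a := by
      apply Continuous.ext_on hDAdense
      · exact Ψ.continuous.comp Φ.continuous
      · exact continuous_id
      · intro a ha
        have hm := hφ0mem a ha
        simp only
        rw [hΦ a ha, hΨ _ hm]
        refine hψ0_eq _ _ _ (fun z w => ?_)
        rw [hφ01 a ha z, lam_alpha]
    intro a
    exact congrFun key a
  have hΦΨ : ∀ x : B, Φ (Ψ x) = x := by
    have key : (fun x : B => Φ (Ψ x)) = fun x : B => x := by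
      apply Continuous.ext_on hDBdense
      · exact Φ.continuous.comp Ψ.continuous
      · exact continuous_id
      · intro x hx
        have hm := hψ0mem x hx
        simp only
        rw [hΨ x hx, hΦ _ hm]
        refine hφ0_eq _ _ _ (fun z => ?_)
        refine u_detect _ _ (fun w => ?_)
        rw [lam_alpha, hψ01 x hx z w]
    intro x
    exact congrFun key x
  have hΨinj : Function.Injective ⇑Ψ := by
    intro x y h
    rw [← hΦΨ x, ← hΦΨ y, h]
  have hΨprod : ∀ x y : B, Ψ (x * star y) = E.linner (u x) (u y) := by
    intro x y
    have hm : x * star y ∈ Submodule.span ℂ {x : B | ∃ y z : B, x = y * star z} :=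
      Submodule.subset_span ⟨x, y, rfl⟩
    rw [hΨ _ hm]
    refine hψ0_eq _ _ _ (fun z w => ?_)
    have h1 : (x * star y) * z = v (E.lsmul (E.linner (u x) (u y)) (u z)) := by
      rw [alpha_lam, mul_assoc]
    rw [h1, lam_alpha]
  -- assemble the star-algebra equivalence and the linear equivalence
  refine ⟨{ toFun := ⇑Φ, invFun := ⇑Ψ, left_inv := hΨΦ, right_inv := hΦΨ,
            map_mul' := hΦmul, map_add' := fun a b => map_add Φ a b,
            map_smul' := fun c a => map_smul Φ c a, map_star' := hΦstar },
          { toFun := u, map_add' := hu_add, map_smul' := hu_smul,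
            invFun := v, left_inv := hvu, right_inv := huv },
          ?_, ?_, ?_, ?_⟩
  · intro a b
    show u (Φ a * b) = E.lsmul a (u b)
    have hq : Φ a * b = v (E.lsmul a (u b)) := by
      have hz : ∀ y : B, (Φ a * b - v (E.lsmul a (u b))) * star y = 0 := by
        intro y
        have h1 : Ψ ((Φ a * b) * star y) = a * E.linner (u b) (u y) := by
          rw [mul_assoc, hΨmul, hΨΦ, hΨprod]
        have h2 : Ψ (v (E.lsmul a (u b)) * star y) = a * E.linner (u b) (u y) := by
          rw [hΨprod, huv, E.linner_lsmul]
        have h3 : Ψ ((Φ a * b - v (E.lsmul a (u b))) * star y) = Ψ 0 := by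
          rw [sub_mul, map_sub, h1, h2, sub_self, map_zero]
        exact hΨinj h3
      exact sub_eq_zero.mp (cstar_mul_star_cancel
        (hz (Φ a * b - v (E.lsmul a (u b)))))
    rw [hq, huv]
  · intro b c
    exact u_mul b c
  · intro b c
    show E.rinner (u b) (u c) = star b * c
    rw [hri, hvu]
  · intro b c
    show E.linner (u b) (u c) = Ψ (b * star c)
    rw [hΨprod]

/-- An imprimitivity Hilbert `A,B`-bimodule `F` is regular if and only if there is a
∗-isomorphism `φ : A → B` such that `F` is isomorphic, as an `A,B`-bimodule with inner
products, to the bimodule `_φB` (which is `B` with left `A`-action `a·b = φ(a)b`, left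
inner product `_A⟨ξ,η⟩ = φ⁻¹(ξ η*)`, and right structure from `B`). -/
theorem stmt10 {A B F : Type*}
    [NonUnitalCStarAlgebra A] [NonUnitalCStarAlgebra B]
    [AddCommGroup F] [Module ℂ F] (E : ImprimitivityBimodule A B F) :
    E.Regular ↔
      ∃ (φ : A ≃⋆ₐ[ℂ] B) (Θ : B ≃ₗ[ℂ] F),
        (∀ a b, Θ (φ a * b) = E.lsmul a (Θ b)) ∧
        (∀ b c, Θ (b * c) = E.rsmul (Θ b) c) ∧
        (∀ b c, E.rinner (Θ b) (Θ c) = star b * c) ∧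
        (∀ b c, E.linner (Θ b) (Θ c) = φ.symm (b * star c)) := by
  constructor
  · exact fun h => E.regular_forward h
  · rintro ⟨φ, Θ, h1, h2, h3, h4⟩
    refine ⟨⇑Θ, ⇑Θ.symm, fun b b' => map_add Θ b b', fun c b => map_smul Θ c b,
      fun b f => ?_, fun b => Θ.symm_apply_apply b, fun f => Θ.apply_symm_apply f⟩
    have := h3 b (Θ.symm f)
    rwa [Θ.apply_symm_apply] at this
end
end
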